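/- arXiv:1711.04160 — 13 statements merged into one kernel-verified Lean document; each statement's English description precedes it below -/
import Mathlib

section
/- Let m ≥ 1 and let ρ : ℝ → Matrix (Fin m) (Fin m) ℝ be differentiable on a nonempty open interval J ⊆ ℝ, with ρ(r) invertible for every r ∈ J, and satisfying the Sachs equation ρ'(r) = −ρ(r)·ρ(r) for all r ∈ J. Then there exists a constant matrix b (m×m, real) such that ρ(r)⁻¹ = r·1 − b for all r ∈ J. -/
/-!
Along a solution of `ρ' = -ρ²` with invertible values, `(ρ⁻¹)' = -ρ⁻¹ ρ' ρ⁻¹ = 1`, so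
`ρ⁻¹ - r • 1` has zero derivative on the interval `J` and is constant there by the mean value
theorem.
-/

open Matrix

section EntrywiseDerivative

attribute [local instance] Matrix.linftyOpNormedAddCommGroup Matrix.linftyOpNormedSpace

theorem Matrix.hasDerivAt_of_hasDerivAt_apply {𝕜 m n : Type*} [NontriviallyNormedField 𝕜]
    [Fintype m] [Fintype n] [DecidableEq m] [DecidableEq n] {f : 𝕜 → Matrix m n 𝕜}
    {A : Matrix m n 𝕜} {x : 𝕜} (hf : ∀ i j, HasDerivAt (fun t => f t i j) (A i j) x) :
    HasDerivAt f A x := by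
  have hsum : HasDerivAt (fun t => ∑ i, ∑ j, f t i j • single i j (1 : 𝕜))
      (∑ i, ∑ j, A i j • single i j (1 : 𝕜)) x :=
    HasDerivAt.fun_sum fun i _ => HasDerivAt.fun_sum fun j _ => (hf i j).smul_const _
  simpa only [smul_single, smul_eq_mul, mul_one, ← matrix_eq_sum_single] using hsum

end EntrywiseDerivative

section RingInverse

variable {𝕜 R : Type*} [NontriviallyNormedField 𝕜] [NormedRing R] [HasSummableGeomSeries R]
  [NormedAlgebra 𝕜 R] {f : 𝕜 → R} {f' : R} {x : 𝕜}

theorem HasDerivAt.ringInverse (hf : HasDerivAt f f' x) (hx : IsUnit (f x)) :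
    HasDerivAt (fun t => Ring.inverse (f t))
      (-(Ring.inverse (f x) * f' * Ring.inverse (f x))) x := by
  obtain ⟨u, hu⟩ := hx
  rw [← hu]
  refine ((hasFDerivAt_ringInverse u).comp_hasDerivAt_of_eq x hf hu).congr_deriv ?_
  simp

theorem HasDerivAt.ringInverse_of_neg_mul_self (hf : HasDerivAt f (-(f x * f x)) x)
    (hx : IsUnit (f x)) : HasDerivAt (fun t => Ring.inverse (f t)) 1 x := by
  convert hf.ringInverse hx using 1
  rw [mul_neg, neg_mul, neg_neg, ← mul_assoc, Ring.inverse_mul_cancel _ hx, one_mul,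
    Ring.mul_inverse_cancel _ hx]

end RingInverse

theorem Set.OrdConnected.exists_eq_smul_add_of_hasDerivAt {E : Type*} [NormedAddCommGroup E]
    [NormedSpace ℝ E] {f : ℝ → E} {v : E} {s : Set ℝ} (hs : s.OrdConnected)
    (hf : ∀ x ∈ s, HasDerivAt f v x) : ∃ c, ∀ x ∈ s, f x = x • v + c := by
  rcases s.eq_empty_or_nonempty with rfl | ⟨x₀, hx₀⟩
  · exact ⟨0, by simp⟩
  refine ⟨f x₀ - x₀ • v, fun x hx => ?_⟩
  have hderiv : ∀ y ∈ s, HasDerivWithinAt (fun t => f t - t • v) 0 s y := fun y hy => by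
    simpa only [one_smul, sub_self] using
      ((hf y hy).fun_sub ((hasDerivAt_id' y).smul_const v)).hasDerivWithinAt
  have hconst := hs.convex.norm_image_sub_le_of_norm_hasDerivWithin_le hderiv (C := 0)
    (fun _ _ => by simp) hx₀ hx
  rw [zero_mul, norm_le_zero_iff, sub_eq_zero] at hconst
  rw [← hconst]; abel

theorem integrated_sachs_equation_general
    (m : ℕ)
    (ρ : ℝ → Matrix (Fin m) (Fin m) ℝ)
    (J : Set ℝ) (hJconn : J.OrdConnected)
    (hinv : ∀ r ∈ J, IsUnit (ρ r))
    (hder : ∀ r ∈ J, ∀ i j, HasDerivAt (fun s => ρ s i j) ((-(ρ r * ρ r)) i j) r) :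
    ∃ b : Matrix (Fin m) (Fin m) ℝ,
      ∀ r ∈ J, (ρ r)⁻¹ = r • (1 : Matrix (Fin m) (Fin m) ℝ) - b := by
  -- a submultiplicative norm, so that `Ring.inverse` is differentiable
  let : NormedRing (Matrix (Fin m) (Fin m) ℝ) := Matrix.linftyOpNormedRing
  let : NormedAlgebra ℝ (Matrix (Fin m) (Fin m) ℝ) := Matrix.linftyOpNormedAlgebra
  obtain ⟨c, hc⟩ := hJconn.exists_eq_smul_add_of_hasDerivAt fun r hr =>
    (Matrix.hasDerivAt_of_hasDerivAt_apply (hder r hr)).ringInverse_of_neg_mul_self (hinv r hr)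
  exact ⟨-c, fun r hr => by rw [nonsing_inv_eq_ringInverse, hc r hr, sub_neg_eq_add]⟩

/-- **Integrated Sachs equation.** If `ρ : ℝ → Matrix (Fin m) (Fin m) ℝ` is
differentiable (entrywise) on a nonempty open interval `J`, takes invertible values on `J`,
and satisfies the Sachs equation `ρ' = -ρ·ρ` there, then there is a constant matrix `b`
with `ρ(r)⁻¹ = r·1 - b` on `J`. -/
theorem integrated_sachs_equation
    (m : ℕ) (hm : 1 ≤ m)
    (ρ : ℝ → Matrix (Fin m) (Fin m) ℝ)
    (J : Set ℝ) (hJopen : IsOpen J) (hJconn : J.OrdConnected) (hJne : J.Nonempty)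
    (hinv : ∀ r ∈ J, IsUnit (ρ r))
    (hder : ∀ r ∈ J, ∀ i j, HasDerivAt (fun s => ρ s i j) ((-(ρ r * ρ r)) i j) r) :
    ∃ b : Matrix (Fin m) (Fin m) ℝ,
      ∀ r ∈ J, (ρ r)⁻¹ = r • (1 : Matrix (Fin m) (Fin m) ℝ) - b :=
  integrated_sachs_equation_general m ρ J hJconn hinv hder
end

section
/- Let J ⊆ ℝ be a nonempty open interval on which r·1 − b is invertible, and let M : ℝ → Matrix (Fin m) (Fin m) ℝ be differentiable on J with M'(r) = −( M(r)·ρ(r) + ρ(r)ᵀ·M(r) ) for all r ∈ J. Then there exists a constant m×m real matrix c such that M(r) = ρ(r)ᵀ · c · ρ(r) for all r ∈ J. Equivalently, the function r ↦ (ρ(r)ᵀ)⁻¹ · M(r) · ρ(r)⁻¹ is constant on J. -/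
open Matrix

/-!
Since `(r • 1 - b)' = 1`, the product rule and the equation for `M` show that the congruence
`N r = (r • 1 - b)ᵀ * M r * (r • 1 - b)` has derivative zero, so `N` is a constant `c` on the
interval `J`, and `M r = ρ(r)ᵀ * c * ρ(r)`.
-/

section EntrywiseDeriv

variable {𝕜 : Type*} [NontriviallyNormedField 𝕜] {l m n : Type*}

/-- Matrices carry no global norm, so derivatives of matrix-valued maps are taken entrywise. -/
def HasEntrywiseDerivAt {F : Type*} [NormedAddCommGroup F] [NormedSpace 𝕜 F]
    (A : 𝕜 → Matrix m n F) (A' : Matrix m n F) (x : 𝕜) : Prop :=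
  ∀ i j, HasDerivAt (fun t => A t i j) (A' i j) x

theorem HasEntrywiseDerivAt.transpose {F : Type*} [NormedAddCommGroup F] [NormedSpace 𝕜 F]
    {A : 𝕜 → Matrix m n F} {A' : Matrix m n F} {x : 𝕜} (hA : HasEntrywiseDerivAt A A' x) :
    HasEntrywiseDerivAt (fun t => (A t)ᵀ) A'ᵀ x :=
  fun i j => hA j i

theorem HasEntrywiseDerivAt.mul {𝔸 : Type*} [NormedRing 𝔸] [NormedAlgebra 𝕜 𝔸] [Fintype m]
    {A : 𝕜 → Matrix l m 𝔸} {B : 𝕜 → Matrix m n 𝔸} {A' : Matrix l m 𝔸} {B' : Matrix m n 𝔸}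
    {x : 𝕜} (hA : HasEntrywiseDerivAt A A' x) (hB : HasEntrywiseDerivAt B B' x) :
    HasEntrywiseDerivAt (fun t => A t * B t) (A' * B x + A x * B') x := by
  intro i k
  simp only [mul_apply, Matrix.add_apply, ← Finset.sum_add_distrib]
  exact HasDerivAt.fun_sum fun j _ => (hA i j).fun_mul (hB j k)

theorem hasEntrywiseDerivAt_smul_one_sub [Fintype n] [DecidableEq n] (b : Matrix n n 𝕜) (x : 𝕜) :
    HasEntrywiseDerivAt (fun t => t • (1 : Matrix n n 𝕜) - b) 1 x := by
  intro i j
  simp only [Matrix.sub_apply, Matrix.smul_apply, smul_eq_mul]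
  exact (hasDerivAt_mul_const _).sub_const _

end EntrywiseDeriv

theorem IsOpen.exists_eq_const_of_hasEntrywiseDerivAt_zero {𝕜 m n F : Type*} [RCLike 𝕜]
    [NormedAddCommGroup F] [NormedSpace 𝕜 F] {f : 𝕜 → Matrix m n F} {s : Set 𝕜}
    (hs : IsOpen s) (hs' : IsPreconnected s) (hf : ∀ x ∈ s, HasEntrywiseDerivAt f 0 x) :
    ∃ c, ∀ x ∈ s, f x = c := by
  choose c hc using fun i j => hs.exists_is_const_of_deriv_eq_zero hs' (f := fun t => f t i j)
    (fun x hx => (hf x hx i j).differentiableAt.differentiableWithinAt)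
    (fun x hx => (hf x hx i j).deriv)
  exact ⟨Matrix.of c, fun x hx => ext fun i j => hc i j x hx⟩

namespace Matrix

variable {n R : Type*} [Fintype n] [DecidableEq n] [CommRing R] {A M : Matrix n n R}

theorem transpose_mul_mul_inv_add_inv_transpose_mul_mul (hA : IsUnit A) :
    Aᵀ * (M * A⁻¹ + A⁻¹ᵀ * M) * A = Aᵀ * M + M * A := by
  have hinv : A⁻¹ * A = 1 := nonsing_inv_mul A ((isUnit_iff_isUnit_det A).mp hA)
  have hinvT : Aᵀ * A⁻¹ᵀ = 1 := by rw [← transpose_mul, hinv, transpose_one]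
  rw [mul_add, add_mul, Matrix.mul_assoc, Matrix.mul_assoc, hinv, Matrix.mul_one,
    ← Matrix.mul_assoc Aᵀ, hinvT, Matrix.one_mul]

theorem eq_transpose_inv_mul_mul_inv_of_transpose_mul_mul_eq {C : Matrix n n R}
    (hA : IsUnit A) (h : Aᵀ * M * A = C) : M = A⁻¹ᵀ * C * A⁻¹ := by
  have hinv : A * A⁻¹ = 1 := mul_nonsing_inv A ((isUnit_iff_isUnit_det A).mp hA)
  have hinvT : A⁻¹ᵀ * Aᵀ = 1 := by rw [← transpose_mul, hinv, transpose_one]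
  rw [← h, Matrix.mul_assoc, Matrix.mul_assoc, hinv, Matrix.mul_one,
    ← Matrix.mul_assoc, hinvT, Matrix.one_mul]

end Matrix

theorem hasEntrywiseDerivAt_transpose_mul_mul_zero {𝕜 n : Type*} [NontriviallyNormedField 𝕜]
    [Fintype n] [DecidableEq n] {A M : 𝕜 → Matrix n n 𝕜} {x : 𝕜}
    (hA : HasEntrywiseDerivAt A 1 x) (hAx : IsUnit (A x))
    (hM : HasEntrywiseDerivAt M (-(M x * (A x)⁻¹ + ((A x)⁻¹)ᵀ * M x)) x) :
    HasEntrywiseDerivAt (fun t => (A t)ᵀ * M t * A t) 0 x := by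
  have hN := (hA.transpose.mul hM).mul hA
  have hzero : (1ᵀ * M x + (A x)ᵀ * -(M x * (A x)⁻¹ + ((A x)⁻¹)ᵀ * M x)) * A x
      + (A x)ᵀ * M x * 1 = 0 := by
    rw [transpose_one, Matrix.one_mul, Matrix.mul_one, mul_neg, add_mul, neg_mul,
      transpose_mul_mul_inv_add_inv_transpose_mul_mul hAx]
    abel
  rwa [hzero] at hN

theorem integrated_bianchi_bw0_general
    (m : ℕ) (b : Matrix (Fin m) (Fin m) ℝ)
    (J : Set ℝ) (hJopen : IsOpen J) (hJconn : J.OrdConnected)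
    (hinv : ∀ r ∈ J, IsUnit (r • (1 : Matrix (Fin m) (Fin m) ℝ) - b))
    (M : ℝ → Matrix (Fin m) (Fin m) ℝ)
    (hder : ∀ r ∈ J, ∀ i j, HasDerivAt (fun s => M s i j)
      ((-(M r * (r • (1 : Matrix (Fin m) (Fin m) ℝ) - b)⁻¹
          + ((r • (1 : Matrix (Fin m) (Fin m) ℝ) - b)⁻¹)ᵀ * M r)) i j) r) :
    ∃ c : Matrix (Fin m) (Fin m) ℝ, ∀ r ∈ J,
      M r = ((r • (1 : Matrix (Fin m) (Fin m) ℝ) - b)⁻¹)ᵀ * c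
              * (r • (1 : Matrix (Fin m) (Fin m) ℝ) - b)⁻¹ := by
  have hN : ∀ r ∈ J, HasEntrywiseDerivAt
      (fun s => (s • (1 : Matrix (Fin m) (Fin m) ℝ) - b)ᵀ * M s * (s • 1 - b)) 0 r :=
    fun r hr => hasEntrywiseDerivAt_transpose_mul_mul_zero
      (hasEntrywiseDerivAt_smul_one_sub b r) (hinv r hr) (hder r hr)
  obtain ⟨c, hc⟩ := hJopen.exists_eq_const_of_hasEntrywiseDerivAt_zero hJconn.isPreconnected hN
  exact ⟨c, fun r hr => eq_transpose_inv_mul_mul_inv_of_transpose_mul_mul_eq (hinv r hr) (hc r hr)⟩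

/-- **Integration of the Bianchi equation for the b.w. 0 Weyl components.**
With `ρ(r) = (r·1 - b)⁻¹` on a nonempty open interval `J` where `r·1 - b` is invertible,
any matrix solution of `M' = -(M·ρ + ρᵀ·M)` has the form `M(r) = ρ(r)ᵀ · c · ρ(r)`
for a constant matrix `c`. -/
theorem integrated_bianchi_bw0
    (m : ℕ) (hm : 1 ≤ m) (b : Matrix (Fin m) (Fin m) ℝ)
    (J : Set ℝ) (hJopen : IsOpen J) (hJconn : J.OrdConnected) (hJne : J.Nonempty)
    (hinv : ∀ r ∈ J, IsUnit (r • (1 : Matrix (Fin m) (Fin m) ℝ) - b))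
    (M : ℝ → Matrix (Fin m) (Fin m) ℝ)
    (hder : ∀ r ∈ J, ∀ i j, HasDerivAt (fun s => M s i j)
      ((-(M r * (r • (1 : Matrix (Fin m) (Fin m) ℝ) - b)⁻¹
          + ((r • (1 : Matrix (Fin m) (Fin m) ℝ) - b)⁻¹)ᵀ * M r)) i j) r) :
    ∃ c : Matrix (Fin m) (Fin m) ℝ, ∀ r ∈ J,
      M r = ((r • (1 : Matrix (Fin m) (Fin m) ℝ) - b)⁻¹)ᵀ * c
              * (r • (1 : Matrix (Fin m) (Fin m) ℝ) - b)⁻¹ :=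
  integrated_bianchi_bw0_general m b J hJopen hJconn hinv M hder
end

section
/- Let J ⊆ ℝ be a nonempty open interval on which r·1 − b is invertible, and let v : ℝ → (Fin m → ℝ) be differentiable on J with v_i'(r) = −2·∑_s v_s(r)·ρ(r)_{s i} for all r ∈ J and all i. Then there exists a constant vector ψ : Fin m → ℝ such that v_i(r) = ∑_{l,k} ψ_l · ρ(r)_{l k} · ρ(r)_{k i} for all r ∈ J and all i. Equivalently, the row vector r ↦ v(r)·ρ(r)⁻¹·ρ(r)⁻¹ is constant on J. -/
open Matrix

/-!
Set `A(r) = r·1 - b`, so that `ρ = A⁻¹` and `A' = 1`. Along a solution `v` of `v' = -2 v ρ`,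
the row vector `w = v A A` has derivative `w' = v' A A + 2 v A = -2 v A + 2 v A = 0`; hence
`w` is a constant `ψ` on the interval `J`, and `v = ψ ρ ρ`.
-/

section Calculus

variable {𝕜 : Type*} [NontriviallyNormedField 𝕜] {m n : Type*}

theorem HasDerivAt.vecMul [Fintype m] {v : 𝕜 → m → 𝕜} {v' : m → 𝕜} {M : 𝕜 → Matrix m n 𝕜}
    {M' : Matrix m n 𝕜} {r : 𝕜} (hv : HasDerivAt v v' r)
    (hM : ∀ i j, HasDerivAt (fun t => M t i j) (M' i j) r) :
    HasDerivAt (fun t => v t ᵥ* M t) (v' ᵥ* M r + v r ᵥ* M') r := by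
  refine hasDerivAt_pi.2 fun j => ?_
  simpa only [vecMul_apply_eq_sum, Pi.add_apply, ← Finset.sum_add_distrib] using
    HasDerivAt.fun_sum fun i _ => (hasDerivAt_pi.1 hv i).fun_mul (hM i j)

theorem hasDerivAt_smul_one_sub_apply [DecidableEq n] (b : Matrix n n 𝕜) (r : 𝕜) (i j : n) :
    HasDerivAt (fun t => (t • (1 : Matrix n n 𝕜) - b) i j) ((1 : Matrix n n 𝕜) i j) r := by
  simp only [Matrix.sub_apply, Matrix.smul_apply, smul_eq_mul]
  simpa using ((hasDerivAt_id' r).mul_const ((1 : Matrix n n 𝕜) i j)).sub_const (b i j)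

end Calculus

theorem hasDerivAt_vecMul_smul_one_sub_sq_eq_zero {n : Type*} [Fintype n] [DecidableEq n]
    {b : Matrix n n ℝ} {v : ℝ → n → ℝ} {r : ℝ} (hr : IsUnit (r • (1 : Matrix n n ℝ) - b))
    (hv : HasDerivAt v ((-2 : ℝ) • (v r ᵥ* (r • (1 : Matrix n n ℝ) - b)⁻¹)) r) :
    HasDerivAt (fun t => v t ᵥ* (t • (1 : Matrix n n ℝ) - b) ᵥ* (t • (1 : Matrix n n ℝ) - b))
      0 r := by
  have hinv_mul := nonsing_inv_mul _ ((isUnit_iff_isUnit_det _).1 hr)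
  convert (hv.vecMul (hasDerivAt_smul_one_sub_apply b r)).vecMul
    (hasDerivAt_smul_one_sub_apply b r) using 1
  simp only [vecMul_one, add_vecMul, smul_vecMul, vecMul_vecMul, hinv_mul]
  module

theorem integrated_bianchi_Psi_i_general
    (m : ℕ) (b : Matrix (Fin m) (Fin m) ℝ)
    (J : Set ℝ) (hJopen : IsOpen J) (hJconn : J.OrdConnected)
    (hinv : ∀ r ∈ J, IsUnit (r • (1 : Matrix (Fin m) (Fin m) ℝ) - b))
    (v : ℝ → Fin m → ℝ)
    (hder : ∀ r ∈ J, ∀ i, HasDerivAt (fun t => v t i)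
      (-2 * ∑ s, v r s * (r • (1 : Matrix (Fin m) (Fin m) ℝ) - b)⁻¹ s i) r) :
    ∃ ψ : Fin m → ℝ, ∀ r ∈ J, ∀ i,
      v r i = ∑ l, ∑ k, ψ l * (r • (1 : Matrix (Fin m) (Fin m) ℝ) - b)⁻¹ l k
                * (r • (1 : Matrix (Fin m) (Fin m) ℝ) - b)⁻¹ k i := by
  set A : ℝ → Matrix (Fin m) (Fin m) ℝ := fun r => r • 1 - b
  have hw : ∀ r ∈ J, HasDerivAt (fun t => v t ᵥ* A t ᵥ* A t) 0 r := fun r hr =>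
    hasDerivAt_vecMul_smul_one_sub_sq_eq_zero (hinv r hr) <| hasDerivAt_pi.2 fun i => by
      simpa [vecMul_apply_eq_sum] using hder r hr i
  obtain ⟨ψ, hψ⟩ := hJopen.exists_is_const_of_deriv_eq_zero hJconn.isPreconnected
    (fun r hr => (hw r hr).differentiableAt.differentiableWithinAt)
    (fun r hr => (hw r hr).deriv)
  refine ⟨ψ, fun r hr i => ?_⟩
  have hA : A r * (A r)⁻¹ = 1 := mul_nonsing_inv _ ((isUnit_iff_isUnit_det _).1 (hinv r hr))
  have hv : v r = ψ ᵥ* (A r)⁻¹ ᵥ* (A r)⁻¹ := by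
    rw [← hψ r hr, vecMul_vecMul (v r ᵥ* A r), hA, vecMul_one, vecMul_vecMul, hA, vecMul_one]
  rw [hv]
  simp only [vecMul_apply_eq_sum, Finset.sum_mul]
  exact Finset.sum_comm

/-- **Integration of the Bianchi equation `DΨ_i = -2Ψ_s ρ_{si}`.**
With `ρ(r) = (r·1 - b)⁻¹` on a nonempty open interval `J` where `r·1 - b` is invertible,
any vector solution of `v_i' = -2 ∑_s v_s ρ_{si}` has the form
`v_i(r) = ∑_{l,k} ψ_l ρ(r)_{lk} ρ(r)_{ki}` for a constant vector `ψ`. -/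
theorem integrated_bianchi_Psi_i
    (m : ℕ) (hm : 1 ≤ m) (b : Matrix (Fin m) (Fin m) ℝ)
    (J : Set ℝ) (hJopen : IsOpen J) (hJconn : J.OrdConnected) (hJne : J.Nonempty)
    (hinv : ∀ r ∈ J, IsUnit (r • (1 : Matrix (Fin m) (Fin m) ℝ) - b))
    (v : ℝ → Fin m → ℝ)
    (hder : ∀ r ∈ J, ∀ i, HasDerivAt (fun t => v t i)
      (-2 * ∑ s, v r s * (r • (1 : Matrix (Fin m) (Fin m) ℝ) - b)⁻¹ s i) r) :
    ∃ ψ : Fin m → ℝ, ∀ r ∈ J, ∀ i,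
      v r i = ∑ l, ∑ k, ψ l * (r • (1 : Matrix (Fin m) (Fin m) ℝ) - b)⁻¹ l k
                * (r • (1 : Matrix (Fin m) (Fin m) ℝ) - b)⁻¹ k i :=
  integrated_bianchi_Psi_i_general m b J hJopen hJconn hinv v hder
end

section
/- Let J ⊆ ℝ be a nonempty open interval on which r·1 − b is invertible, let k ∈ ℝ, and let N : ℝ → Matrix (Fin m) (Fin m) ℝ be differentiable on J with N'(r) = −N(r)·ρ(r) − k·1 for all r ∈ J. Then there exists a constant m×m real matrix n₀ such that N(r) = ( −(k/2)·r²·1 + k·r·b + n₀ )·ρ(r) for all r ∈ J. -/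
open Matrix

/-!
Put `M(r) = r • 1 - b`, so that `M' = 1` and `ρ = M⁻¹`. The equation `N' = -N ρ - k 1` gives
`(N M)' = N' M + N = -k M`, which is also the derivative of `-(k/2) r² 1 + k r b`. Two functions
with the same derivative on an open interval differ by a constant `n₀`, and multiplying
`N M = -(k/2) r² 1 + k r b + n₀` on the right by `ρ` gives the formula.
-/

theorem IsOpen.exists_eq_add_of_hasDerivAt {𝕜 E : Type*} [RCLike 𝕜]
    [NormedAddCommGroup E] [NormedSpace 𝕜 E] {s : Set 𝕜} (hs : IsOpen s)
    (hs' : IsPreconnected s) {f g f' : 𝕜 → E} (hf : ∀ x ∈ s, HasDerivAt f (f' x) x)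
    (hg : ∀ x ∈ s, HasDerivAt g (f' x) x) : ∃ a, s.EqOn f (g · + a) :=
  hs.exists_eq_add_of_deriv_eq hs'
    (fun x hx => (hf x hx).differentiableAt.differentiableWithinAt)
    (fun x hx => (hg x hx).differentiableAt.differentiableWithinAt)
    (fun x hx => (hf x hx).deriv.trans (hg x hx).deriv.symm)

namespace Matrix

variable {𝕜 l m n : Type*}

section NontriviallyNormedField

variable [NontriviallyNormedField 𝕜]

theorem hasDerivAt_mul_apply {𝔸 : Type*} [NormedRing 𝔸] [NormedAlgebra 𝕜 𝔸] [Fintype m]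
    {A : 𝕜 → Matrix l m 𝔸} {B : 𝕜 → Matrix m n 𝔸} {A' : Matrix l m 𝔸} {B' : Matrix m n 𝔸}
    {x : 𝕜} (hA : ∀ i j, HasDerivAt (fun y => A y i j) (A' i j) x)
    (hB : ∀ i j, HasDerivAt (fun y => B y i j) (B' i j) x) (i : l) (j : n) :
    HasDerivAt (fun y => (A y * B y) i j) ((A' * B x + A x * B') i j) x := by
  simp only [mul_apply, add_apply, ← Finset.sum_add_distrib]
  exact HasDerivAt.fun_sum fun k _ => (hA i k).mul (hB k j)

variable [DecidableEq n]

theorem hasDerivAt_smul_one_sub_apply (b : Matrix n n 𝕜) (x : 𝕜) (i j : n) :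
    HasDerivAt (fun y => (y • (1 : Matrix n n 𝕜) - b) i j) ((1 : Matrix n n 𝕜) i j) x := by
  simpa using ((hasDerivAt_id' x).smul_const ((1 : Matrix n n 𝕜) i j)).sub_const (b i j)

theorem hasDerivAt_mul_smul_one_sub_apply [Fintype n] {b : Matrix n n 𝕜} {c x : 𝕜}
    {N : 𝕜 → Matrix n n 𝕜} (hb : IsUnit (x • (1 : Matrix n n 𝕜) - b))
    (hN : ∀ i j, HasDerivAt (fun y => N y i j)
      ((-(N x * (x • (1 : Matrix n n 𝕜) - b)⁻¹) - c • (1 : Matrix n n 𝕜)) i j) x) (i j : n) :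
    HasDerivAt (fun y => (N y * (y • (1 : Matrix n n 𝕜) - b)) i j)
      ((-c • (x • (1 : Matrix n n 𝕜) - b)) i j) x := by
  refine (hasDerivAt_mul_apply hN (hasDerivAt_smul_one_sub_apply b x) i j).congr_deriv ?_
  rw [sub_mul, neg_mul, Matrix.mul_assoc, nonsing_inv_mul _ ((isUnit_iff_isUnit_det _).mp hb)]
  simp only [Matrix.mul_one, smul_mul, Matrix.one_mul, add_apply, sub_apply, neg_apply,
    smul_apply, smul_eq_mul]
  ring

end NontriviallyNormedField

section RCLike

variable [RCLike 𝕜]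

theorem exists_eq_add_of_hasDerivAt_apply {E : Type*} [NormedAddCommGroup E] [NormedSpace 𝕜 E]
    {s : Set 𝕜} (hs : IsOpen s) (hs' : IsPreconnected s) {F G F' : 𝕜 → Matrix m n E}
    (hF : ∀ x ∈ s, ∀ i j, HasDerivAt (fun y => F y i j) (F' x i j) x)
    (hG : ∀ x ∈ s, ∀ i j, HasDerivAt (fun y => G y i j) (F' x i j) x) :
    ∃ C, s.EqOn F (G · + C) := by
  choose C hC using fun i j =>
    hs.exists_eq_add_of_hasDerivAt hs' (fun x hx => hF x hx i j) (fun x hx => hG x hx i j)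
  exact ⟨of C, fun x hx => ext fun i j => hC i j hx⟩

theorem hasDerivAt_quadratic_apply [DecidableEq n] (b : Matrix n n 𝕜) (c x : 𝕜) (i j : n) :
    HasDerivAt (fun y => ((-(c / 2) * y ^ 2) • (1 : Matrix n n 𝕜) + (c * y) • b) i j)
      ((-c • (x • (1 : Matrix n n 𝕜) - b)) i j) x := by
  refine ((((hasDerivAt_pow 2 x).const_mul (-(c / 2))).smul_const ((1 : Matrix n n 𝕜) i j)).add
    (((hasDerivAt_id' x).const_mul c).smul_const (b i j))).congr_deriv ?_
  simp only [sub_apply, smul_apply, smul_eq_mul]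
  field_simp
  ring

end RCLike

end Matrix

theorem integrated_ricci_Nij_general
    (m : ℕ) (b : Matrix (Fin m) (Fin m) ℝ) (k : ℝ)
    (J : Set ℝ) (hJopen : IsOpen J) (hJconn : J.OrdConnected)
    (hinv : ∀ r ∈ J, IsUnit (r • (1 : Matrix (Fin m) (Fin m) ℝ) - b))
    (N : ℝ → Matrix (Fin m) (Fin m) ℝ)
    (hder : ∀ r ∈ J, ∀ i j, HasDerivAt (fun s => N s i j)
      ((-(N r * (r • (1 : Matrix (Fin m) (Fin m) ℝ) - b)⁻¹)
          - k • (1 : Matrix (Fin m) (Fin m) ℝ)) i j) r) :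
    ∃ n₀ : Matrix (Fin m) (Fin m) ℝ, ∀ r ∈ J,
      N r = ((-(k / 2) * r ^ 2) • (1 : Matrix (Fin m) (Fin m) ℝ) + (k * r) • b + n₀)
              * (r • (1 : Matrix (Fin m) (Fin m) ℝ) - b)⁻¹ := by
  obtain ⟨n₀, hn₀⟩ := exists_eq_add_of_hasDerivAt_apply hJopen hJconn.isPreconnected
    (fun r hr => hasDerivAt_mul_smul_one_sub_apply (hinv r hr) (hder r hr))
    (fun r _ => hasDerivAt_quadratic_apply b k r)
  refine ⟨n₀, fun r hr => ?_⟩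
  calc N r = N r * (r • 1 - b) * (r • 1 - b)⁻¹ :=
        (mul_nonsing_inv_cancel_right _ _ ((isUnit_iff_isUnit_det _).mp (hinv r hr))).symm
    _ = _ := congrArg (· * _) (hn₀ hr)

/-- **Integration of the Ricci identity `DN_{ij} = -N_{ik}ρ_{kj} - R̃ δ_{ij}`.**
With `ρ(r) = (r·1 - b)⁻¹` on a nonempty open interval `J` where `r·1 - b` is invertible,
any matrix solution of `N' = -N·ρ - k·1` has the form
`N(r) = (-(k/2)·r²·1 + k·r·b + n₀)·ρ(r)` for a constant matrix `n₀`. -/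
theorem integrated_ricci_Nij
    (m : ℕ) (hm : 1 ≤ m) (b : Matrix (Fin m) (Fin m) ℝ) (k : ℝ)
    (J : Set ℝ) (hJopen : IsOpen J) (hJconn : J.OrdConnected) (hJne : J.Nonempty)
    (hinv : ∀ r ∈ J, IsUnit (r • (1 : Matrix (Fin m) (Fin m) ℝ) - b))
    (N : ℝ → Matrix (Fin m) (Fin m) ℝ)
    (hder : ∀ r ∈ J, ∀ i j, HasDerivAt (fun s => N s i j)
      ((-(N r * (r • (1 : Matrix (Fin m) (Fin m) ℝ) - b)⁻¹)
          - k • (1 : Matrix (Fin m) (Fin m) ℝ)) i j) r) :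
    ∃ n₀ : Matrix (Fin m) (Fin m) ℝ, ∀ r ∈ J,
      N r = ((-(k / 2) * r ^ 2) • (1 : Matrix (Fin m) (Fin m) ℝ) + (k * r) • b + n₀)
              * (r • (1 : Matrix (Fin m) (Fin m) ℝ) - b)⁻¹ :=
  integrated_ricci_Nij_general m b k J hJopen hJconn hinv N hder
end

section
/- Let m ≥ 1, let b be an m×m real matrix, and let c : Fin m → Fin m → Fin m → Fin m → ℝ satisfy c_{ijls} = −c_{jils} and c_{ijls} = c_{lsij} for all indices. Suppose that for all sufficiently large r ∈ ℝ (so that r·1 − b is invertible) and for all i, j: ∑_{k,l,s} ρ(r)_{l j} · ρ(r)_{s k} · c_{i k l s} = 0, where ρ(r) = (r·1 − b)⁻¹. Then: (i) ∑_k c_{i k j k} = 0 for all i, j; (ii) ∑_{j,l} c_{i j k l} · (b_{l j} + b_{j l})/2 = 0 for all i, k; and (iii) ∑_{j,l} c_{i j k l} · (b_{l j} − b_{j l})/2 = 0 for all i, k. -/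
/-!
Since `ρ(r)` is invertible, the hypothesis says that the linear functional
`A ↦ ∑_{k,s} A_{sk} c_{ikps}` vanishes at `ρ(r)` for all large `r`. As `r → ∞`,
`r ρ(r) → 1` and `r (r ρ(r) - 1) = b (r ρ(r)) → b`, so it vanishes at `1` and at `b`.
The pair symmetry of `c` turns the second identity into its transpose in `b`,
and (ii), (iii) are half the sum and difference of the two.
-/

open Matrix Filter Topology

namespace Matrix

variable {n : Type*} [Fintype n] [DecidableEq n]

theorem mul_inv_smul_one_sub {b : Matrix n n ℝ} {r : ℝ} (h : IsUnit (r • 1 - b)) :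
    b * (r • 1 - b)⁻¹ = r • (r • 1 - b)⁻¹ - 1 := by
  have := mul_nonsing_inv _ ((isUnit_iff_isUnit_det _).mp h)
  rw [sub_mul, smul_mul, one_mul] at this
  exact eq_sub_of_add_eq (sub_eq_iff_eq_add'.mp this).symm

theorem tendsto_smul_inv_smul_one_sub (b : Matrix n n ℝ)
    (hunit : ∀ᶠ r : ℝ in atTop, IsUnit (r • 1 - b)) :
    Tendsto (fun r : ℝ => r • (r • 1 - b)⁻¹) atTop (𝓝 1) := by
  have hinv : ContinuousAt Inv.inv (1 : Matrix n n ℝ) :=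
    continuousAt_matrix_inv _ (by simp [Ring.inverse_eq_inv'])
  have hlin : Tendsto (fun r : ℝ => 1 - r⁻¹ • b) atTop (𝓝 1) := by
    simpa using tendsto_const_nhds.sub ((tendsto_inv_atTop_zero (𝕜 := ℝ)).smul_const b)
  have := hinv.tendsto.comp hlin
  rw [inv_one] at this
  refine this.congr' ?_
  filter_upwards [hunit, eventually_gt_atTop 0] with r hr hr0
  refine inv_eq_right_inv ?_
  show (1 - r⁻¹ • b) * _ = 1
  rw [sub_mul, one_mul, smul_mul, mul_smul_comm, mul_inv_smul_one_sub hr,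
    smul_smul, inv_mul_cancel₀ hr0.ne', one_smul, sub_sub_cancel]

theorem trace_eq_zero_and_trace_mul_eq_zero_of_resolvent (b X : Matrix n n ℝ)
    (hunit : ∀ᶠ r : ℝ in atTop, IsUnit (r • 1 - b))
    (h : ∀ᶠ r : ℝ in atTop, trace ((r • 1 - b)⁻¹ * X) = 0) :
    trace X = 0 ∧ trace (b * X) = 0 := by
  have hlim := tendsto_smul_inv_smul_one_sub b hunit
  have hcont : Continuous fun A : Matrix n n ℝ => trace (A * X) := by fun_prop
  have hX : trace X = 0 := by
    have := (hcont.tendsto 1).comp hlim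
    rw [one_mul] at this
    refine tendsto_nhds_unique this (tendsto_const_nhds.congr' ?_)
    filter_upwards [h] with r hr
    simp [hr]
  refine ⟨hX, ?_⟩
  have hbρ := hlim.const_mul b
  rw [mul_one] at hbρ
  have := (hcont.tendsto b).comp hbρ
  refine tendsto_nhds_unique this (tendsto_const_nhds.congr' ?_)
  filter_upwards [h, hunit] with r hr hu
  simp [mul_inv_smul_one_sub hu, sub_mul, hr, hX]

theorem trace_mul_slice_eq_zero_of_isUnit {A : Matrix n n ℝ} (hA : IsUnit A)
    (c : n → n → n → n → ℝ) (i : n)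
    (h : ∀ j, ∑ k, ∑ l, ∑ s, A l j * A s k * c i k l s = 0) (p : n) :
    trace (A * of fun k s => c i k p s) = 0 := by
  have hvec : (fun l => trace (A * of fun k s => c i k l s)) ᵥ* A = 0 := by
    funext j
    rw [Pi.zero_apply, ← h j, Finset.sum_comm]
    simp only [vecMul, dotProduct, trace, diag, mul_apply, of_apply, Finset.sum_mul, mul_assoc]
    refine Finset.sum_congr rfl fun l _ => Finset.sum_comm.trans ?_
    simp only [mul_comm (A l j), mul_assoc]
  have := vecMul_injective_iff_isUnit.2 hA (hvec.trans (zero_vecMul A).symm)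
  exact congrFun this p

end Matrix

theorem tracefree_constraints_general
    (m : ℕ) (b : Matrix (Fin m) (Fin m) ℝ)
    (c : Fin m → Fin m → Fin m → Fin m → ℝ)
    (hpair : ∀ i j l s, c i j l s = c l s i j)
    (htrace : ∃ R : ℝ, ∀ r : ℝ, R ≤ r →
      IsUnit (r • (1 : Matrix (Fin m) (Fin m) ℝ) - b) ∧
      ∀ i j, ∑ k, ∑ l, ∑ s,
        (r • (1 : Matrix (Fin m) (Fin m) ℝ) - b)⁻¹ l j
          * (r • (1 : Matrix (Fin m) (Fin m) ℝ) - b)⁻¹ s k * c i k l s = 0) :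
    (∀ i j, ∑ k, c i k j k = 0) ∧
    (∀ i k, ∑ j, ∑ l, c i j k l * ((b l j + b j l) / 2) = 0) ∧
    (∀ i k, ∑ j, ∑ l, c i j k l * ((b l j - b j l) / 2) = 0) := by
  obtain ⟨R, hR⟩ := htrace
  have hunit : ∀ᶠ r : ℝ in atTop, IsUnit (r • 1 - b) :=
    (eventually_ge_atTop R).mono fun r hr => (hR r hr).1
  have hX (i p : Fin m) :=
    trace_eq_zero_and_trace_mul_eq_zero_of_resolvent b (of fun k s => c i k p s) hunit <|
      (eventually_ge_atTop R).mono fun r hr => trace_mul_slice_eq_zero_of_isUnit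
        (isUnit_nonsing_inv_iff.2 (hR r hr).1) c i ((hR r hr).2 i) p
  have hb (i k : Fin m) : ∑ j, ∑ l, c i j k l * b l j = 0 := by
    rw [Finset.sum_comm]
    simpa [trace, mul_apply, mul_comm] using (hX i k).2
  have hbT (i k : Fin m) : ∑ j, ∑ l, c i j k l * b j l = 0 := by
    simp_rw [hpair i _ k]
    rw [Finset.sum_comm]
    exact hb k i
  refine ⟨fun i j => by simpa [trace] using (hX i j).1, fun i k => ?_, fun i k => ?_⟩
  all_goals simp only [mul_div_assoc', mul_add, mul_sub, add_div, sub_div, Finset.sum_add_distrib,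
    Finset.sum_sub_distrib, ← Finset.sum_div, hb, hbT]; norm_num

/-- **Constraints from the trace-free condition `C_{ikjk} = 0`.**
If the trace condition `∑_{k,l,s} ρ(r)_{lj} ρ(r)_{sk} c_{ikls} = 0` (with
`ρ(r) = (r·1 - b)⁻¹`) holds for all sufficiently large `r`, then `c_{ikjk} = 0`,
`c_{ijkl} b_{(lj)} = 0` and `c_{ijkl} b_{[lj]} = 0`. -/
theorem tracefree_constraints
    (m : ℕ) (hm : 1 ≤ m) (b : Matrix (Fin m) (Fin m) ℝ)
    (c : Fin m → Fin m → Fin m → Fin m → ℝ)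
    (hanti : ∀ i j l s, c i j l s = -c j i l s)
    (hpair : ∀ i j l s, c i j l s = c l s i j)
    (htrace : ∃ R : ℝ, ∀ r : ℝ, R ≤ r →
      IsUnit (r • (1 : Matrix (Fin m) (Fin m) ℝ) - b) ∧
      ∀ i j, ∑ k, ∑ l, ∑ s,
        (r • (1 : Matrix (Fin m) (Fin m) ℝ) - b)⁻¹ l j
          * (r • (1 : Matrix (Fin m) (Fin m) ℝ) - b)⁻¹ s k * c i k l s = 0) :
    (∀ i j, ∑ k, c i k j k = 0) ∧
    (∀ i k, ∑ j, ∑ l, c i j k l * ((b l j + b j l) / 2) = 0) ∧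
    (∀ i k, ∑ j, ∑ l, c i j k l * ((b l j - b j l) / 2) = 0) :=
  tracefree_constraints_general m b c hpair htrace
end

section
/- Let m ≥ 1, let b be an m×m real matrix, and let c : Fin m → Fin m → Fin m → Fin m → ℝ satisfy c_{ijls} = −c_{jils} and c_{ijls} = c_{lsij} for all indices. For r with r·1 − b invertible define C(r)_{ijkm} = ∑_{l,s} ρ(r)_{l k} · ρ(r)_{s m} · c_{i j l s}, where ρ(r) = (r·1 − b)⁻¹. Suppose that for all sufficiently large r and all i, j, k, m: C(r)_{ijkm} + C(r)_{ikmj} + C(r)_{imjk} = 0 (the cyclic identity over the last three indices). Then: (i) c_{ijkl} + c_{iklj} + c_{iljk} = 0 for all indices; and (ii) ∑_s ( c_{isjk}·b_{sm} + c_{iskm}·b_{sj} + c_{ismj}·b_{sk} ) = 0 for all i, j, k, m. -/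
open Matrix Filter Topology

/-!
Write `ρ r = (r • 1 - b)⁻¹` and `Z r = r • ρ r = (1 - r⁻¹ • b)⁻¹`. As `r → ∞`, `Z r → 1` and
`r • (Z r - 1) = b * Z r → b`. The cyclic sum of the contraction of `c` with two matrices is a
continuous bilinear map `B`, and `B (Z r) (Z r) = r ^ 2 • B (ρ r) (ρ r)` vanishes for large `r`.
In the limit `B 1 1 = 0`, which is the cyclic identity for `c`. The first-order term
`r • (B (Z r) (Z r) - B 1 1) = B (r • (Z r - 1)) (Z r) + B 1 (r • (Z r - 1))` is then zero for
large `r` and tends to `B b 1 + B 1 b`; regrouped by the cyclic identity for `c`, its vanishing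
is the second constraint.
-/

section Resolvent

variable {n : Type*} [Fintype n] [DecidableEq n] (b : Matrix n n ℝ)

omit [Fintype n] in
theorem tendsto_one_sub_inv_smul_atTop :
    Tendsto (fun r : ℝ => 1 - r⁻¹ • b) atTop (𝓝 1) := by
  simpa using tendsto_const_nhds.sub ((tendsto_inv_atTop_zero (𝕜 := ℝ)).smul_const b)

theorem eventually_isUnit_one_sub_inv_smul :
    ∀ᶠ r : ℝ in atTop, IsUnit (1 - r⁻¹ • b) := by
  have hdet :
      Tendsto (fun r : ℝ => (1 - r⁻¹ • b).det) atTop (𝓝 (1 : Matrix n n ℝ).det) :=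
    ((continuous_id.matrix_det).tendsto _).comp (tendsto_one_sub_inv_smul_atTop b)
  rw [det_one] at hdet
  filter_upwards [hdet.eventually_ne one_ne_zero] with r hr
  exact (isUnit_iff_isUnit_det _).2 (isUnit_iff_ne_zero.2 hr)

theorem tendsto_inv_one_sub_inv_smul_atTop :
    Tendsto (fun r : ℝ => (1 - r⁻¹ • b)⁻¹) atTop (𝓝 1) := by
  have hinv : Tendsto Inv.inv (𝓝 (1 : Matrix n n ℝ)) (𝓝 1) := by
    have hdet : ContinuousAt Ring.inverse (1 : Matrix n n ℝ).det := by
      rw [det_one, Ring.inverse_eq_inv']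
      exact continuousAt_inv₀ one_ne_zero
    simpa using (continuousAt_matrix_inv 1 hdet).tendsto
  exact hinv.comp (tendsto_one_sub_inv_smul_atTop b)

theorem smul_inv_smul_one_sub {r : ℝ} (hr : r ≠ 0) (hu : IsUnit (1 - r⁻¹ • b)) :
    r • (r • 1 - b)⁻¹ = (1 - r⁻¹ • b)⁻¹ := by
  have hsmul : r • 1 - b = r • (1 - r⁻¹ • b) := by
    rw [smul_sub, smul_smul, mul_inv_cancel₀ hr, one_smul]
  have := invertibleOfNonzero hr
  rw [hsmul, inv_smul _ _ ((isUnit_iff_isUnit_det _).1 hu), invOf_eq_inv, smul_smul,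
    mul_inv_cancel₀ hr, one_smul]

theorem smul_inv_one_sub_inv_smul_sub_one {r : ℝ} (hr : r ≠ 0) (hu : IsUnit (1 - r⁻¹ • b)) :
    r • ((1 - r⁻¹ • b)⁻¹ - 1) = b * (1 - r⁻¹ • b)⁻¹ := by
  set Z := (1 - r⁻¹ • b)⁻¹
  have h : Z - r⁻¹ • (b * Z) = 1 :=
    calc Z - r⁻¹ • (b * Z) = (1 - r⁻¹ • b) * Z := by rw [sub_mul, one_mul, smul_mul]
      _ = 1 := mul_nonsing_inv _ ((isUnit_iff_isUnit_det _).1 hu)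
  rw [← h, sub_sub_cancel, smul_smul, mul_inv_cancel₀ hr, one_smul]

theorem tendsto_smul_resolvent_atTop :
    Tendsto (fun r : ℝ => r • (r • 1 - b)⁻¹) atTop (𝓝 1) := by
  refine (tendsto_inv_one_sub_inv_smul_atTop b).congr' ?_
  filter_upwards [eventually_isUnit_one_sub_inv_smul b, eventually_ne_atTop 0] with r hu hr
  exact (smul_inv_smul_one_sub b hr hu).symm

theorem tendsto_smul_smul_resolvent_sub_one_atTop :
    Tendsto (fun r : ℝ => r • (r • (r • 1 - b)⁻¹ - 1)) atTop (𝓝 b) := by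
  have h := (tendsto_inv_one_sub_inv_smul_atTop b).const_mul b
  rw [mul_one] at h
  refine h.congr' ?_
  filter_upwards [eventually_isUnit_one_sub_inv_smul b, eventually_ne_atTop 0] with r hu hr
  rw [smul_inv_smul_one_sub b hr hu, smul_inv_one_sub_inv_smul_sub_one b hr hu]

variable {V : Type*} [AddCommGroup V] [Module ℝ V]
  (B : Matrix n n ℝ →ₗ[ℝ] Matrix n n ℝ →ₗ[ℝ] V)

theorem eventually_apply_smul_resolvent_eq_zero
    (h : ∀ᶠ r : ℝ in atTop, B (r • 1 - b)⁻¹ (r • 1 - b)⁻¹ = 0) :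
    ∀ᶠ r : ℝ in atTop, B (r • (r • 1 - b)⁻¹) (r • (r • 1 - b)⁻¹) = 0 := by
  filter_upwards [h] with r hr
  simp [hr]

variable [TopologicalSpace V] [T2Space V]

theorem apply_one_one_eq_zero_of_eventually_resolvent
    (hB : Continuous fun p : Matrix n n ℝ × Matrix n n ℝ => B p.1 p.2)
    (h : ∀ᶠ r : ℝ in atTop, B (r • 1 - b)⁻¹ (r • 1 - b)⁻¹ = 0) :
    B 1 1 = 0 := by
  have hZ := tendsto_smul_resolvent_atTop b
  refine tendsto_nhds_unique ((hB.tendsto (1, 1)).comp (hZ.prodMk_nhds hZ)) ?_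
  exact tendsto_const_nhds.congr' ((eventually_apply_smul_resolvent_eq_zero b B h).mono
    fun r hr => hr.symm)

theorem apply_one_add_one_apply_eq_zero_of_eventually_resolvent [ContinuousAdd V]
    (hB : Continuous fun p : Matrix n n ℝ × Matrix n n ℝ => B p.1 p.2)
    (h : ∀ᶠ r : ℝ in atTop, B (r • 1 - b)⁻¹ (r • 1 - b)⁻¹ = 0) :
    B b 1 + B 1 b = 0 := by
  have hZ := tendsto_smul_resolvent_atTop b
  have hE := tendsto_smul_smul_resolvent_sub_one_atTop b
  have h11 := apply_one_one_eq_zero_of_eventually_resolvent b B hB h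
  have hexpand : ∀ (r : ℝ) (Z : Matrix n n ℝ),
      B (r • (Z - 1)) Z + B 1 (r • (Z - 1)) = r • (B Z Z - B 1 1) := fun r Z => by
    simp only [map_smul, map_sub, LinearMap.smul_apply, LinearMap.sub_apply, ← smul_add,
      sub_add_sub_cancel]
  refine tendsto_nhds_unique
    (((hB.tendsto (b, 1)).comp (hE.prodMk_nhds hZ)).add
      ((hB.tendsto (1, b)).comp (tendsto_const_nhds.prodMk_nhds hE))) ?_
  refine tendsto_const_nhds.congr' ?_
  filter_upwards [eventually_apply_smul_resolvent_eq_zero b B h] with r hr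
  rw [Function.comp_apply, Function.comp_apply, hexpand, hr, h11, sub_zero, smul_zero]

end Resolvent

section WeylTensor

variable {n : Type*}

def cyclicSum : (n → n → n → n → ℝ) →ₗ[ℝ] (n → n → n → n → ℝ) where
  toFun T i j k l := T i j k l + T i k l j + T i l j k
  map_add' _ _ := by ext; simp only [Pi.add_apply]; ring
  map_smul' _ _ := by ext; simp only [Pi.smul_apply, smul_eq_mul, RingHom.id_apply]; ring

theorem cyclicSum_eq_zero_iff (T : n → n → n → n → ℝ) :
    cyclicSum T = 0 ↔ ∀ i j k l, T i j k l + T i k l j + T i l j k = 0 := by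
  simp only [funext_iff]
  rfl

variable [Fintype n]

def contractLastTwo (c : n → n → n → n → ℝ) :
    Matrix n n ℝ →ₗ[ℝ] Matrix n n ℝ →ₗ[ℝ] (n → n → n → n → ℝ) :=
  LinearMap.mk₂ ℝ (fun M N i j k l => ∑ p, ∑ s, M p k * N s l * c i j p s)
    (fun _ _ _ => by
      ext; simp only [Matrix.add_apply, add_mul, Finset.sum_add_distrib, Pi.add_apply])
    (fun _ _ _ => by
      ext; simp only [Matrix.smul_apply, Finset.mul_sum, Pi.smul_apply, smul_eq_mul, mul_assoc])
    (fun _ _ _ => by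
      ext; simp only [Matrix.add_apply, mul_add, add_mul, Finset.sum_add_distrib, Pi.add_apply])
    (fun _ _ _ => by
      ext
      simp only [Matrix.smul_apply, Finset.mul_sum, Pi.smul_apply, smul_eq_mul, mul_assoc,
        mul_left_comm])

theorem continuous_contractLastTwo (c : n → n → n → n → ℝ) :
    Continuous fun p : Matrix n n ℝ × Matrix n n ℝ => contractLastTwo c p.1 p.2 := by
  unfold contractLastTwo
  simp only [LinearMap.mk₂_apply]
  fun_prop

variable [DecidableEq n] (c : n → n → n → n → ℝ)

@[simp]
theorem contractLastTwo_one_one : contractLastTwo c 1 1 = c := by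
  ext i j k l
  simp [contractLastTwo, one_apply]

theorem cyclicSum_contractLastTwo_add_apply (hc : cyclicSum c = 0) (b : Matrix n n ℝ)
    (i j k l : n) :
    cyclicSum (contractLastTwo c b 1 + contractLastTwo c 1 b) i j k l =
      -∑ s, (c i s j k * b s l + c i s k l * b s j + c i s l j * b s k) := by
  rw [cyclicSum_eq_zero_iff] at hc
  have hterm : ∀ s, b s k * c i j s l + b s l * c i j k s + b s l * c i k s j
      + b s j * c i k l s + b s j * c i l s k + b s k * c i l j s
      + (c i s j k * b s l + c i s k l * b s j + c i s l j * b s k) = 0 := fun s => by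
    linear_combination b s l * hc i s j k + b s j * hc i s k l + b s k * hc i s l j
  have hsum := Finset.sum_eq_zero (s := Finset.univ) fun s _ => hterm s
  simp only [Finset.sum_add_distrib] at hsum
  simp only [cyclicSum, contractLastTwo, LinearMap.mk₂_apply, LinearMap.coe_mk, AddHom.coe_mk,
    Pi.add_apply, one_apply, mul_ite, mul_one, mul_zero, ite_mul, zero_mul, one_mul,
    Finset.sum_ite_eq', Finset.mem_univ, if_true, Finset.sum_ite_irrel, Finset.sum_const_zero,
    Finset.sum_add_distrib, neg_add_rev]
  linarith

end WeylTensor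

theorem cyclic_identity_constraints_general
    (m : ℕ) (b : Matrix (Fin m) (Fin m) ℝ)
    (c : Fin m → Fin m → Fin m → Fin m → ℝ)
    (hcyc : ∃ R : ℝ, ∀ r : ℝ, R ≤ r →
      IsUnit (r • (1 : Matrix (Fin m) (Fin m) ℝ) - b) ∧
      ∀ i j k l,
        (∑ p, ∑ s, (r • (1 : Matrix (Fin m) (Fin m) ℝ) - b)⁻¹ p k
            * (r • (1 : Matrix (Fin m) (Fin m) ℝ) - b)⁻¹ s l * c i j p s)
        + (∑ p, ∑ s, (r • (1 : Matrix (Fin m) (Fin m) ℝ) - b)⁻¹ p l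
            * (r • (1 : Matrix (Fin m) (Fin m) ℝ) - b)⁻¹ s j * c i k p s)
        + (∑ p, ∑ s, (r • (1 : Matrix (Fin m) (Fin m) ℝ) - b)⁻¹ p j
            * (r • (1 : Matrix (Fin m) (Fin m) ℝ) - b)⁻¹ s k * c i l p s) = 0) :
    (∀ i j k l, c i j k l + c i k l j + c i l j k = 0) ∧
    (∀ i j k l, ∑ s, (c i s j k * b s l + c i s k l * b s j + c i s l j * b s k) = 0) := by
  obtain ⟨R, hR⟩ := hcyc
  set B := (contractLastTwo c).compr₂ cyclicSum
  have hB :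
      Continuous fun p : Matrix (Fin m) (Fin m) ℝ × Matrix (Fin m) (Fin m) ℝ => B p.1 p.2 :=
    cyclicSum.continuous_of_finiteDimensional.comp (continuous_contractLastTwo c)
  have h : ∀ᶠ r : ℝ in atTop, B (r • 1 - b)⁻¹ (r • 1 - b)⁻¹ = 0 :=
    eventually_atTop.2 ⟨R, fun r hr => (cyclicSum_eq_zero_iff _).2 (hR r hr).2⟩
  have hc : cyclicSum c = 0 := by
    simpa [B] using apply_one_one_eq_zero_of_eventually_resolvent b B hB h
  have hb : cyclicSum (contractLastTwo c b 1 + contractLastTwo c 1 b) = 0 := by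
    simpa [B] using apply_one_add_one_apply_eq_zero_of_eventually_resolvent b B hB h
  refine ⟨(cyclicSum_eq_zero_iff c).1 hc, fun i j k l => ?_⟩
  simpa [hb] using cyclicSum_contractLastTwo_add_apply c hc b i j k l

/-- **Constraints from the cyclic Weyl identity.**
Let `C(r)_{ijkm} = ∑_{l,s} ρ(r)_{lk} ρ(r)_{sm} c_{ijls}` with `ρ(r) = (r·1 - b)⁻¹`.
If the cyclic identity `C_{ijkm} + C_{ikmj} + C_{imjk} = 0` holds for all sufficiently
large `r`, then `c_{i{jkl}} = 0` and `∑_s (c_{isjk} b_{sm} + c_{iskm} b_{sj} + c_{ismj} b_{sk}) = 0`. -/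
theorem cyclic_identity_constraints
    (m : ℕ) (hm : 1 ≤ m) (b : Matrix (Fin m) (Fin m) ℝ)
    (c : Fin m → Fin m → Fin m → Fin m → ℝ)
    (hanti : ∀ i j l s, c i j l s = -c j i l s)
    (hpair : ∀ i j l s, c i j l s = c l s i j)
    (hcyc : ∃ R : ℝ, ∀ r : ℝ, R ≤ r →
      IsUnit (r • (1 : Matrix (Fin m) (Fin m) ℝ) - b) ∧
      ∀ i j k l,
        (∑ p, ∑ s, (r • (1 : Matrix (Fin m) (Fin m) ℝ) - b)⁻¹ p k
            * (r • (1 : Matrix (Fin m) (Fin m) ℝ) - b)⁻¹ s l * c i j p s)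
        + (∑ p, ∑ s, (r • (1 : Matrix (Fin m) (Fin m) ℝ) - b)⁻¹ p l
            * (r • (1 : Matrix (Fin m) (Fin m) ℝ) - b)⁻¹ s j * c i k p s)
        + (∑ p, ∑ s, (r • (1 : Matrix (Fin m) (Fin m) ℝ) - b)⁻¹ p j
            * (r • (1 : Matrix (Fin m) (Fin m) ℝ) - b)⁻¹ s k * c i l p s) = 0) :
    (∀ i j k l, c i j k l + c i k l j + c i l j k = 0) ∧
    (∀ i j k l, ∑ s, (c i s j k * b s l + c i s k l * b s j + c i s l j * b s k) = 0) :=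
  cyclic_identity_constraints_general m b c hcyc
end

section
/- Let b₂, b₃, b₄, b₅, W₂₃, W₂₅ be real numbers satisfying: (b₃−b₄)W₂₃ + (b₅−b₄)W₂₅ = 0, (b₂−b₅)W₂₃ + (b₄−b₅)W₂₅ = 0, (b₅−b₂)W₂₃ + (b₃−b₂)W₂₅ = 0, and (b₄−b₃)W₂₃ + (b₂−b₃)W₂₅ = 0. If (W₂₃, W₂₅) ≠ (0, 0), then there exist real numbers a and d such that the multiset {b₂, b₃, b₄, b₅} equals the multiset {a, a, d, d}. -/
/-- **Eigenvalue degeneracy forced by a nonzero `W` component.**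
If the `W`-part of the system `c_{ijkl} b_{(lj)} = 0` holds and `(W₂₃, W₂₅) ≠ (0,0)`,
then the eigenvalues `b₂, b₃, b₄, b₅` consist of (at least) two coinciding pairs. -/
theorem eigenvalue_pairs_from_W
    (b₂ b₃ b₄ b₅ W₂₃ W₂₅ : ℝ)
    (h1 : (b₃ - b₄) * W₂₃ + (b₅ - b₄) * W₂₅ = 0)
    (h2 : (b₂ - b₅) * W₂₃ + (b₄ - b₅) * W₂₅ = 0)
    (h3 : (b₅ - b₂) * W₂₃ + (b₃ - b₂) * W₂₅ = 0)
    (h4 : (b₄ - b₃) * W₂₃ + (b₂ - b₃) * W₂₅ = 0)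
    (hW : ¬(W₂₃ = 0 ∧ W₂₅ = 0)) :
    ∃ a d : ℝ, ({b₂, b₃, b₄, b₅} : Multiset ℝ) = ({a, a, d, d} : Multiset ℝ) := by
  by_cases hA : W₂₃ = 0
  · -- then W₂₅ ≠ 0
    have hB : W₂₅ ≠ 0 := fun h => hW ⟨hA, h⟩
    subst hA
    have e5 : b₅ = b₄ := by
      have := mul_eq_zero.mp (by linarith : (b₅ - b₄) * W₂₅ = 0)
      rcases this with h | h
      · linarith
      · exact absurd h hB
    have e3 : b₃ = b₂ := by
      have := mul_eq_zero.mp (by linarith : (b₃ - b₂) * W₂₅ = 0)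
      rcases this with h | h
      · linarith
      · exact absurd h hB
    exact ⟨b₂, b₄, by rw [e5, e3]⟩
  · by_cases hB : W₂₅ = 0
    · subst hB
      have e34 : b₃ = b₄ := by
        have := mul_eq_zero.mp (by linarith : (b₃ - b₄) * W₂₃ = 0)
        rcases this with h | h
        · linarith
        · exact absurd h hA
      have e25 : b₂ = b₅ := by
        have := mul_eq_zero.mp (by linarith : (b₂ - b₅) * W₂₃ = 0)
        rcases this with h | h
        · linarith
        · exact absurd h hA
      refine ⟨b₂, b₃, ?_⟩
      rw [e34] at *
      rw [← e25]
      show (b₂ ::ₘ b₄ ::ₘ b₄ ::ₘ b₂ ::ₘ 0) = (b₂ ::ₘ b₂ ::ₘ b₄ ::ₘ b₄ ::ₘ 0)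
      rw [Multiset.cons_swap b₄ b₂, Multiset.cons_swap b₄ b₂]
    · -- both nonzero
      have s1 : b₂ + b₃ - b₄ - b₅ = 0 := by
        have : (b₂ + b₃ - b₄ - b₅) * W₂₃ = 0 := by linarith [h1, h2]
        rcases mul_eq_zero.mp this with h | h
        · exact h
        · exact absurd h hA
      have s2 : b₂ + b₅ - b₃ - b₄ = 0 := by
        have : (b₂ + b₅ - b₃ - b₄) * W₂₅ = 0 := by linarith [h1, h4]
        rcases mul_eq_zero.mp this with h | h
        · exact h
        · exact absurd h hB
      have e35 : b₃ = b₅ := by linarith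
      have e24 : b₂ = b₄ := by linarith
      refine ⟨b₂, b₃, ?_⟩
      rw [← e35, ← e24]
      show (b₂ ::ₘ b₃ ::ₘ b₂ ::ₘ b₃ ::ₘ 0) = (b₂ ::ₘ b₂ ::ₘ b₃ ::ₘ b₃ ::ₘ 0)
      rw [Multiset.cons_swap b₃ b₂]
end

section
/- Let b₂, b₃, b₄, b₅, Y₂₃, Y₂₄ be real numbers satisfying: (b₂−b₄)Y₂₃ + (b₂−b₃)Y₂₄ = 0, (b₃−b₅)Y₂₃ + (b₄−b₅)Y₂₄ = 0, (b₂−b₄)Y₂₃ + (b₅−b₄)Y₂₄ = 0, and (b₅−b₃)Y₂₃ + (b₂−b₃)Y₂₄ = 0. If (Y₂₃, Y₂₄) ≠ (0, 0), then there exist real numbers a and d such that the multiset {b₂, b₃, b₄, b₅} equals the multiset {a, a, d, d}. -/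
lemma ms_swap2 (x y : ℝ) : ({x, y, y, x} : Multiset ℝ) = ({x, x, y, y} : Multiset ℝ) := by
  show x ::ₘ y ::ₘ y ::ₘ x ::ₘ 0 = x ::ₘ x ::ₘ y ::ₘ y ::ₘ 0
  rw [Multiset.cons_swap y x (0 : Multiset ℝ), Multiset.cons_swap y x (y ::ₘ 0)]

lemma ms_swap (x y : ℝ) : ({x, y, x, y} : Multiset ℝ) = ({x, x, y, y} : Multiset ℝ) := by
  have : ({y, x, y} : Multiset ℝ) = ({x, y, y} : Multiset ℝ) := Multiset.cons_swap y x {y}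
  show x ::ₘ ({y, x, y} : Multiset ℝ) = _
  rw [this]; rfl

/-- **Eigenvalue degeneracy forced by a nonzero `Y` component.**
If the `Y`-part of the system obtained from the cyclic constraint holds and
`(Y₂₃, Y₂₄) ≠ (0,0)`, then the eigenvalues `b₂, b₃, b₄, b₅` consist of (at least)
two coinciding pairs. -/
theorem eigenvalue_pairs_from_Y
    (b₂ b₃ b₄ b₅ Y₂₃ Y₂₄ : ℝ)
    (h1 : (b₂ - b₄) * Y₂₃ + (b₂ - b₃) * Y₂₄ = 0)
    (h2 : (b₃ - b₅) * Y₂₃ + (b₄ - b₅) * Y₂₄ = 0)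
    (h3 : (b₂ - b₄) * Y₂₃ + (b₅ - b₄) * Y₂₄ = 0)
    (h4 : (b₅ - b₃) * Y₂₃ + (b₂ - b₃) * Y₂₄ = 0)
    (hY : ¬(Y₂₃ = 0 ∧ Y₂₄ = 0)) :
    ∃ a d : ℝ, ({b₂, b₃, b₄, b₅} : Multiset ℝ) = ({a, a, d, d} : Multiset ℝ) := by
  by_cases hY3 : Y₂₃ = 0
  · have hY4 : Y₂₄ ≠ 0 := fun h => hY ⟨hY3, h⟩
    have e1 : (b₂ - b₃) * Y₂₄ = 0 := by rw [hY3] at h1; linarith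
    have e2 : (b₄ - b₅) * Y₂₄ = 0 := by rw [hY3] at h2; linarith
    have hb1 : b₂ = b₃ := by rcases mul_eq_zero.mp e1 with h | h; linarith; exact absurd h hY4
    have hb2 : b₄ = b₅ := by rcases mul_eq_zero.mp e2 with h | h; linarith; exact absurd h hY4
    exact ⟨b₂, b₄, by rw [← hb1, ← hb2]⟩
  · by_cases hY4 : Y₂₄ = 0
    · have e1 : (b₂ - b₄) * Y₂₃ = 0 := by rw [hY4] at h1; linarith
      have e2 : (b₃ - b₅) * Y₂₃ = 0 := by rw [hY4] at h2; linarith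
      have hb1 : b₂ = b₄ := by rcases mul_eq_zero.mp e1 with h | h; linarith; exact absurd h hY3
      have hb2 : b₃ = b₅ := by rcases mul_eq_zero.mp e2 with h | h; linarith; exact absurd h hY3
      exact ⟨b₂, b₃, by rw [← hb1, ← hb2]; exact ms_swap b₂ b₃⟩
    · have e1 : (b₂ - b₃ - (b₅ - b₄)) * Y₂₄ = 0 := by linear_combination h1 - h3
      have e2 : (b₂ - b₄ - (b₅ - b₃)) * Y₂₃ = 0 := by linear_combination h1 - h4
      have f1 : b₂ - b₃ - (b₅ - b₄) = 0 := by
        rcases mul_eq_zero.mp e1 with h | h; exact h; exact absurd h hY4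
      have f2 : b₂ - b₄ - (b₅ - b₃) = 0 := by
        rcases mul_eq_zero.mp e2 with h | h; exact h; exact absurd h hY3
      have hb1 : b₃ = b₄ := by linarith
      have hb2 : b₂ = b₅ := by linarith
      exact ⟨b₂, b₃, by rw [← hb1, ← hb2]; exact ms_swap2 b₂ b₃⟩
end

section
/- Let c : Fin 4 → Fin 4 → Fin 4 → Fin 4 → ℝ be a nonzero Weyl-type tensor, i.e. c ≠ 0 and c_{ijkl} = −c_{jikl}, c_{ijkl} = c_{klij}, c_{ijkl} + c_{iklj} + c_{iljk} = 0, ∑_k c_{ikjk} = 0 for all i, j. Let b₀, b₁, b₂, b₃ be real numbers and let B be the diagonal matrix B = diag(b₀, b₁, b₂, b₃). Assume: (i) ∑_{j,l} c_{ijkl}·B_{lj} = 0 for all i, k; and (ii) ∑_s ( c_{isjk}·B_{sm} + c_{iskm}·B_{sj} + c_{ismj}·B_{sk} ) = 0 for all i, j, k, m. Then there exist real numbers a and d such that the multiset {b₀, b₁, b₂, b₃} equals the multiset {a, a, d, d}. -/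
open Matrix

set_option maxHeartbeats 2000000

private lemma abc_aux (b0 b1 b2 b3 x y z : ℝ)
    (H1 : ¬(b0 = b1 ∧ b2 = b3)) (H2 : ¬(b0 = b2 ∧ b1 = b3)) (H3 : ¬(b0 = b3 ∧ b1 = b2))
    (hs : x + y + z = 0)
    (e0 : x * b1 + y * b2 + z * b3 = 0)
    (e1 : x * b0 + z * b2 + y * b3 = 0)
    (e2 : y * b0 + z * b1 + x * b3 = 0)
    (e3 : z * b0 + y * b1 + x * b2 = 0) :
    x = 0 ∧ y = 0 ∧ z = 0 := by
  have hx1 : x * (b0 + b1 - b2 - b3) = 0 := by linear_combination e0 + e1 - (b2 + b3) * hs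
  have hx2 : x * ((b0 - b1 - b2 + b3) * (b0 - b1 + b2 - b3)) = 0 := by
    linear_combination (b1 - b0) * e0 + (b0 - b1) * e1 + (b2 - b3) * e2 + (b3 - b2) * e3
  have hy1 : y * (b0 + b2 - b1 - b3) = 0 := by linear_combination e0 + e2 - (b1 + b3) * hs
  have hy2 : y * ((b0 - b2 - b1 + b3) * (b0 - b2 + b1 - b3)) = 0 := by
    linear_combination (b2 - b0) * e0 + (b1 - b3) * e1 + (b0 - b2) * e2 + (b3 - b1) * e3
  have hz1 : z * (b0 + b3 - b1 - b2) = 0 := by linear_combination e0 + e3 - (b1 + b2) * hs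
  have hz2 : z * ((b0 - b3 - b1 + b2) * (b0 - b3 + b1 - b2)) = 0 := by
    linear_combination (b3 - b0) * e0 + (b1 - b2) * e1 + (b2 - b1) * e2 + (b0 - b3) * e3
  have hx : x = 0 := by
    by_contra h
    have s1 : b0 + b1 - b2 - b3 = 0 := by
      rcases mul_eq_zero.mp hx1 with h' | h'
      · exact absurd h' h
      · exact h'
    rcases mul_eq_zero.mp hx2 with h' | h'
    · exact h h'
    rcases mul_eq_zero.mp h' with h'' | h''
    · exact H2 ⟨by linarith, by linarith⟩
    · exact H3 ⟨by linarith, by linarith⟩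
  have hy : y = 0 := by
    by_contra h
    have s1 : b0 + b2 - b1 - b3 = 0 := by
      rcases mul_eq_zero.mp hy1 with h' | h'
      · exact absurd h' h
      · exact h'
    rcases mul_eq_zero.mp hy2 with h' | h'
    · exact h h'
    rcases mul_eq_zero.mp h' with h'' | h''
    · exact H1 ⟨by linarith, by linarith⟩
    · exact H3 ⟨by linarith, by linarith⟩
  have hz : z = 0 := by
    by_contra h
    have s1 : b0 + b3 - b1 - b2 = 0 := by
      rcases mul_eq_zero.mp hz1 with h' | h'
      · exact absurd h' h
      · exact h'
    rcases mul_eq_zero.mp hz2 with h' | h'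
    · exact h h'
    rcases mul_eq_zero.mp h' with h'' | h''
    · exact H1 ⟨by linarith, by linarith⟩
    · exact H2 ⟨by linarith, by linarith⟩
  exact ⟨hx, hy, hz⟩

/-- **A nonzero b.w. 0 Weyl tensor forces two pairs of repeated eigenvalues of `b_{(ij)}`.**
If `c` is a nonzero Weyl-type tensor on `Fin 4`, `B = diag(b₀,b₁,b₂,b₃)`, and the
constraints `c_{ijkl} B_{lj} = 0` and `∑_s (c_{isjk} B_{sm} + c_{iskm} B_{sj} + c_{ismj} B_{sk}) = 0`
hold, then the multiset of eigenvalues `{b₀,b₁,b₂,b₃}` has the form `{a,a,d,d}`. -/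
theorem eigenvalue_pairs_from_nonzero_weyl
    (c : Fin 4 → Fin 4 → Fin 4 → Fin 4 → ℝ) (hc : c ≠ 0)
    (hanti : ∀ i j k l, c i j k l = -c j i k l)
    (hpair : ∀ i j k l, c i j k l = c k l i j)
    (hcyc : ∀ i j k l, c i j k l + c i k l j + c i l j k = 0)
    (htrace : ∀ i j, ∑ k, c i k j k = 0)
    (bv : Fin 4 → ℝ)
    (B : Matrix (Fin 4) (Fin 4) ℝ) (hB : B = Matrix.diagonal bv)
    (h1 : ∀ i k, ∑ j, ∑ l, c i j k l * B l j = 0)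
    (h2 : ∀ i j k m, ∑ s, (c i s j k * B s m + c i s k m * B s j + c i s m j * B s k) = 0) :
    ∃ a d : ℝ, ({bv 0, bv 1, bv 2, bv 3} : Multiset ℝ) = ({a, a, d, d} : Multiset ℝ) := by
  by_cases H1 : bv 0 = bv 1 ∧ bv 2 = bv 3
  · refine ⟨bv 0, bv 2, ?_⟩
    rw [← H1.1, ← H1.2]
  by_cases H2 : bv 0 = bv 2 ∧ bv 1 = bv 3
  · refine ⟨bv 0, bv 1, ?_⟩
    rw [← H2.1, ← H2.2]
    simp only [Multiset.insert_eq_cons]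
    rw [Multiset.cons_swap (bv 1) (bv 0)]
  by_cases H3 : bv 0 = bv 3 ∧ bv 1 = bv 2
  · refine ⟨bv 0, bv 1, ?_⟩
    rw [← H3.1, ← H3.2]
    simp only [Multiset.insert_eq_cons, ← Multiset.cons_zero]
    rw [Multiset.cons_swap (bv 1) (bv 0), Multiset.cons_swap (bv 1) (bv 0)]
  exfalso
  -- basic symmetry consequences
  have hs2 : ∀ i j k l, c i j k l = -c i j l k := by
    intro i j k l
    rw [hpair i j k l, hanti k l i j, hpair l k i j]
  have hz1 : ∀ i k l, c i i k l = 0 := by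
    intro i k l; have := hanti i i k l; linarith
  have hz2 : ∀ i j k, c i j k k = 0 := by
    intro i j k; have := hs2 i j k k; linarith
  have hdd : ∀ i j, c j i j i = c i j i j := by
    intro i j
    rw [hanti j i j i, hs2 i j j i, neg_neg]
  -- sums against the diagonal matrix
  have hd : ∀ (f : Fin 4 → ℝ) (m : Fin 4), (∑ s, f s * B s m) = f m * bv m := by
    intro f m
    rw [hB]
    rw [Finset.sum_eq_single m]
    · rw [Matrix.diagonal_apply_eq]
    · intro s _ hs
      rw [Matrix.diagonal_apply_ne _ hs, mul_zero]
    · intro h; exact absurd (Finset.mem_univ m) h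
  have hE : ∀ i m j k, c i m j k * bv m + c i j k m * bv j + c i k m j * bv k = 0 := by
    intro i m j k
    have e := h2 i j k m
    rw [Finset.sum_add_distrib, Finset.sum_add_distrib] at e
    rw [hd (fun s => c i s j k) m, hd (fun s => c i s k m) j, hd (fun s => c i s m j) k] at e
    exact e
  have h1' : ∀ i k, c i 0 k 0 * bv 0 + c i 1 k 1 * bv 1 + c i 2 k 2 * bv 2 + c i 3 k 3 * bv 3 = 0 := by
    intro i k
    have e := h1 i k
    simp only [hd] at e
    rw [Fin.sum_univ_four] at e
    exact e
  have htr : ∀ i j, c i 0 j 0 + c i 1 j 1 + c i 2 j 2 + c i 3 j 3 = 0 := by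
    intro i j
    have e := htrace i j
    rw [Fin.sum_univ_four] at e
    exact e
  have kill3 : ∀ i j m, c i j i m * (bv j - bv m) = 0 := by
    intro i j m
    have e := hE i m j i
    have c1 : c i m j i = -c i j i m := by rw [hpair i m j i, hanti j i i m]
    have c2 : c i i m j = 0 := hz1 i m j
    linear_combination e - bv m * c1 - bv i * c2
  have resolve : ∀ (T u v : ℝ), T * u = 0 → T * v = 0 → (u = 0 ∧ v = 0 → False) → T = 0 := by
    intro T u v hu hv hf
    rcases mul_eq_zero.mp hu with h | h
    · exact h
    rcases mul_eq_zero.mp hv with h' | h'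
    · exact h'
    exact absurd ⟨h, h'⟩ hf
  -- cross components X = c0123, Y = c0231, Z = c0312
  have hsumX : c 0 1 2 3 + c 0 2 3 1 + c 0 3 1 2 = 0 := hcyc 0 1 2 3
  have ec0 := hE 0 1 2 3
  have ec1 : c 0 1 2 3 * bv 0 + c 0 3 1 2 * bv 2 + c 0 2 3 1 * bv 3 = 0 := by
    have e := hE 1 0 2 3
    have a1 : c 1 0 2 3 = -c 0 1 2 3 := hanti 1 0 2 3
    have a2 : c 1 2 3 0 = -c 0 3 1 2 := by rw [hpair 1 2 3 0, hanti 3 0 1 2]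
    have a3 : c 1 3 0 2 = -c 0 2 3 1 := by rw [hpair 1 3 0 2, hs2 0 2 1 3]
    linear_combination -e + bv 0 * a1 + bv 2 * a2 + bv 3 * a3
  have ec2 : c 0 2 3 1 * bv 0 + c 0 3 1 2 * bv 1 + c 0 1 2 3 * bv 3 = 0 := by
    have e := hE 2 0 1 3
    have a1 : c 2 0 1 3 = c 0 2 3 1 := by rw [hanti 2 0 1 3, hs2 0 2 1 3, neg_neg]
    have a2 : c 2 1 3 0 = c 0 3 1 2 := by rw [hpair 2 1 3 0, hanti 3 0 2 1, hs2 0 3 2 1, neg_neg]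
    have a3 : c 2 3 0 1 = c 0 1 2 3 := hpair 2 3 0 1
    linear_combination e - bv 0 * a1 - bv 1 * a2 - bv 3 * a3
  have ec3 : c 0 3 1 2 * bv 0 + c 0 2 3 1 * bv 1 + c 0 1 2 3 * bv 2 = 0 := by
    have e := hE 3 0 1 2
    have a1 : c 3 0 1 2 = -c 0 3 1 2 := hanti 3 0 1 2
    have a2 : c 3 1 2 0 = -c 0 2 3 1 := by rw [hpair 3 1 2 0, hanti 2 0 3 1]
    have a3 : c 3 2 0 1 = -c 0 1 2 3 := by rw [hpair 3 2 0 1, hs2 0 1 3 2]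
    linear_combination -e + bv 0 * a1 + bv 1 * a2 + bv 2 * a3
  obtain ⟨zX, zY, zZ⟩ :=
    abc_aux (bv 0) (bv 1) (bv 2) (bv 3) (c 0 1 2 3) (c 0 2 3 1) (c 0 3 1 2)
      H1 H2 H3 hsumX ec0 ec1 ec2 ec3
  have z0213 : c 0 2 1 3 = 0 := by rw [hs2 0 2 1 3, zY, neg_zero]
  -- diagonal components
  have t0 := htr 0 0
  have t1 := htr 1 1
  have t2 := htr 2 2
  have t3 := htr 3 3
  have d10 : c 1 0 1 0 = c 0 1 0 1 := hdd 0 1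
  have d20 : c 2 0 2 0 = c 0 2 0 2 := hdd 0 2
  have d21 : c 2 1 2 1 = c 1 2 1 2 := hdd 1 2
  have d30 : c 3 0 3 0 = c 0 3 0 3 := hdd 0 3
  have d31 : c 3 1 3 1 = c 1 3 1 3 := hdd 1 3
  have d32 : c 3 2 3 2 = c 2 3 2 3 := hdd 2 3
  have z00 : c 0 0 0 0 = 0 := hz2 0 0 0
  have z11 : c 1 1 1 1 = 0 := hz2 1 1 1
  have z22 : c 2 2 2 2 = 0 := hz2 2 2 2
  have z33 : c 3 3 3 3 = 0 := hz2 3 3 3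
  have e12 : c 1 2 1 2 = c 0 3 0 3 := by
    linarith [t0, t1, t2, t3, d10, d20, d21, d30, d31, d32, z00, z11, z22, z33]
  have e13 : c 1 3 1 3 = c 0 2 0 2 := by
    linarith [t0, t1, t2, t3, d10, d20, d21, d30, d31, d32, z00, z11, z22, z33]
  have e23 : c 2 3 2 3 = c 0 1 0 1 := by
    linarith [t0, t1, t2, t3, d10, d20, d21, d30, d31, d32, z00, z11, z22, z33]
  have g0 := h1' 0 0
  have g1 := h1' 1 1
  have g2 := h1' 2 2
  have g3 := h1' 3 3
  have q0 : c 0 1 0 1 * bv 1 + c 0 2 0 2 * bv 2 + c 0 3 0 3 * bv 3 = 0 := by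
    linear_combination g0 - bv 0 * z00
  have q1 : c 0 1 0 1 * bv 0 + c 0 3 0 3 * bv 2 + c 0 2 0 2 * bv 3 = 0 := by
    linear_combination g1 - bv 0 * d10 - bv 1 * z11 - bv 2 * e12 - bv 3 * e13
  have q2 : c 0 2 0 2 * bv 0 + c 0 3 0 3 * bv 1 + c 0 1 0 1 * bv 3 = 0 := by
    linear_combination g2 - bv 0 * d20 - bv 1 * (d21.trans e12) - bv 2 * z22 - bv 3 * e23
  have q3 : c 0 3 0 3 * bv 0 + c 0 2 0 2 * bv 1 + c 0 1 0 1 * bv 2 = 0 := by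
    linear_combination g3 - bv 0 * d30 - bv 1 * (d31.trans e13) - bv 2 * (d32.trans e23) - bv 3 * z33
  have hsumD : c 0 1 0 1 + c 0 2 0 2 + c 0 3 0 3 = 0 := by linarith [t0, z00]
  obtain ⟨zD01, zD02, zD03⟩ :=
    abc_aux (bv 0) (bv 1) (bv 2) (bv 3) (c 0 1 0 1) (c 0 2 0 2) (c 0 3 0 3)
      H1 H2 H3 hsumD q0 q1 q2 q3
  have zD12 : c 1 2 1 2 = 0 := by rw [e12, zD03]
  have zD13 : c 1 3 1 3 = 0 := by rw [e13, zD02]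
  have zD23 : c 2 3 2 3 = 0 := by rw [e23, zD01]
  -- three-distinct-index components
  -- pair {0,1} outer, {2,3} inner : c 2 0 2 1, c 3 0 3 1
  have cv0212 : c 0 2 1 2 = c 2 0 2 1 := by rw [hanti 0 2 1 2, hs2 2 0 1 2, neg_neg]
  have cv0313 : c 0 3 1 3 = c 3 0 3 1 := by rw [hanti 0 3 1 3, hs2 3 0 1 3, neg_neg]
  have tr01 := htr 0 1
  have hA01 := h1' 0 1
  have m101 : c 2 0 2 1 * (bv 2 - bv 3) = 0 := by
    linear_combination hA01 - bv 3 * tr01 - (bv 0 - bv 3) * (hz1 0 1 0) - (bv 1 - bv 3) * (hz2 0 1 1)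
      - (bv 2 - bv 3) * cv0212
  have z2021 : c 2 0 2 1 = 0 :=
    resolve _ _ _ m101 (kill3 2 0 1) (fun h => H1 ⟨by linarith [h.2], by linarith [h.1]⟩)
  have z3031 : c 3 0 3 1 = 0 := by
    have := hz1 0 1 0; have := hz2 0 1 1
    linarith [tr01, cv0212, cv0313, z2021, hz1 0 1 0, hz2 0 1 1]
  -- pair {2,3} outer, {0,1} inner : c 0 2 0 3, c 1 2 1 3
  have cv2030 : c 2 0 3 0 = c 0 2 0 3 := by rw [hanti 2 0 3 0, hs2 0 2 3 0, neg_neg]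
  have cv2131 : c 2 1 3 1 = c 1 2 1 3 := by rw [hanti 2 1 3 1, hs2 1 2 3 1, neg_neg]
  have tr23 := htr 2 3
  have hA23 := h1' 2 3
  have m123 : c 0 2 0 3 * (bv 0 - bv 1) = 0 := by
    linear_combination hA23 - bv 1 * tr23 - (bv 2 - bv 1) * (hz1 2 3 2) - (bv 3 - bv 1) * (hz2 2 3 3)
      - (bv 0 - bv 1) * cv2030
  have z0203 : c 0 2 0 3 = 0 :=
    resolve _ _ _ m123 (kill3 0 2 3) (fun h => H1 ⟨by linarith [h.1], by linarith [h.2]⟩)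
  have z1213 : c 1 2 1 3 = 0 := by
    linarith [tr23, cv2030, cv2131, z0203, hz1 2 3 2, hz2 2 3 3]
  -- pair {0,2} outer, {1,3} inner : c 1 0 1 2, c 3 0 3 2
  have cv0121 : c 0 1 2 1 = c 1 0 1 2 := by rw [hanti 0 1 2 1, hs2 1 0 2 1, neg_neg]
  have cv0323 : c 0 3 2 3 = c 3 0 3 2 := by rw [hanti 0 3 2 3, hs2 3 0 2 3, neg_neg]
  have tr02 := htr 0 2
  have hA02 := h1' 0 2
  have m102 : c 1 0 1 2 * (bv 1 - bv 3) = 0 := by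
    linear_combination hA02 - bv 3 * tr02 - (bv 0 - bv 3) * (hz1 0 2 0) - (bv 2 - bv 3) * (hz2 0 2 2)
      - (bv 1 - bv 3) * cv0121
  have z1012 : c 1 0 1 2 = 0 :=
    resolve _ _ _ m102 (kill3 1 0 2) (fun h => H2 ⟨by linarith [h.2], by linarith [h.1]⟩)
  have z3032 : c 3 0 3 2 = 0 := by
    linarith [tr02, cv0121, cv0323, z1012, hz1 0 2 0, hz2 0 2 2]
  -- pair {1,3} outer, {0,2} inner : c 0 1 0 3, c 2 1 2 3
  have cv1030 : c 1 0 3 0 = c 0 1 0 3 := by rw [hanti 1 0 3 0, hs2 0 1 3 0, neg_neg]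
  have cv1232 : c 1 2 3 2 = c 2 1 2 3 := by rw [hanti 1 2 3 2, hs2 2 1 3 2, neg_neg]
  have tr13 := htr 1 3
  have hA13 := h1' 1 3
  have m113 : c 0 1 0 3 * (bv 0 - bv 2) = 0 := by
    linear_combination hA13 - bv 2 * tr13 - (bv 1 - bv 2) * (hz1 1 3 1) - (bv 3 - bv 2) * (hz2 1 3 3)
      - (bv 0 - bv 2) * cv1030
  have z0103 : c 0 1 0 3 = 0 :=
    resolve _ _ _ m113 (kill3 0 1 3) (fun h => H2 ⟨by linarith [h.1], by linarith [h.2]⟩)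
  have z2123 : c 2 1 2 3 = 0 := by
    linarith [tr13, cv1030, cv1232, z0103, hz1 1 3 1, hz2 1 3 3]
  -- pair {0,3} outer, {1,2} inner : c 1 0 1 3, c 2 0 2 3
  have cv0131 : c 0 1 3 1 = c 1 0 1 3 := by rw [hanti 0 1 3 1, hs2 1 0 3 1, neg_neg]
  have cv0232 : c 0 2 3 2 = c 2 0 2 3 := by rw [hanti 0 2 3 2, hs2 2 0 3 2, neg_neg]
  have tr03 := htr 0 3
  have hA03 := h1' 0 3
  have m103 : c 1 0 1 3 * (bv 1 - bv 2) = 0 := by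
    linear_combination hA03 - bv 2 * tr03 - (bv 0 - bv 2) * (hz1 0 3 0) - (bv 3 - bv 2) * (hz2 0 3 3)
      - (bv 1 - bv 2) * cv0131
  have z1013 : c 1 0 1 3 = 0 :=
    resolve _ _ _ m103 (kill3 1 0 3) (fun h => H3 ⟨by linarith [h.2], by linarith [h.1]⟩)
  have z2023 : c 2 0 2 3 = 0 := by
    linarith [tr03, cv0131, cv0232, z1013, hz1 0 3 0, hz2 0 3 3]
  -- pair {1,2} outer, {0,3} inner : c 0 1 0 2, c 3 1 3 2
  have cv1020 : c 1 0 2 0 = c 0 1 0 2 := by rw [hanti 1 0 2 0, hs2 0 1 2 0, neg_neg]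
  have cv1323 : c 1 3 2 3 = c 3 1 3 2 := by rw [hanti 1 3 2 3, hs2 3 1 2 3, neg_neg]
  have tr12 := htr 1 2
  have hA12 := h1' 1 2
  have m112 : c 0 1 0 2 * (bv 0 - bv 3) = 0 := by
    linear_combination hA12 - bv 3 * tr12 - (bv 1 - bv 3) * (hz1 1 2 1) - (bv 2 - bv 3) * (hz2 1 2 2)
      - (bv 0 - bv 3) * cv1020
  have z0102 : c 0 1 0 2 = 0 :=
    resolve _ _ _ m112 (kill3 0 1 2) (fun h => H3 ⟨by linarith [h.1], by linarith [h.2]⟩)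
  have z3132 : c 3 1 3 2 = 0 := by
    linarith [tr12, cv1020, cv1323, z0102, hz1 1 2 1, hz2 1 2 2]
  -- every component vanishes
  have hzero : ∀ i j k l, c i j k l = 0 := by
    intro i j k l
    fin_cases i <;> fin_cases j <;> fin_cases k <;> fin_cases l <;>
      first
      | exact hz1 _ _ _
      | exact hz2 _ _ _
      | assumption
      | (rw [hpair]; assumption)
      | (rw [hanti, neg_eq_zero]; assumption)
      | (rw [hs2, neg_eq_zero]; assumption)
      | (rw [hanti, hs2, neg_neg]; assumption)
      | (rw [hpair, hanti, neg_eq_zero]; assumption)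
      | (rw [hpair, hs2, neg_eq_zero]; assumption)
      | (rw [hpair, hanti, hs2, neg_neg]; assumption)
  apply hc
  funext i j k l
  simpa using hzero i j k l
end

section
/- Let c : Fin 4 → Fin 4 → Fin 4 → Fin 4 → ℝ be a Weyl-type tensor (c_{ijkl} = −c_{jikl}, c_{ijkl} = c_{klij}, c_{ijkl} + c_{iklj} + c_{iljk} = 0, ∑_k c_{ikjk} = 0), let a ≠ d be real numbers, and let B = diag(a, a, d, d). Assume: (i) ∑_{j,l} c_{ijkl}·B_{lj} = 0 for all i, k; and (ii) ∑_s ( c_{isjk}·B_{sm} + c_{iskm}·B_{sj} + c_{ismj}·B_{sk} ) = 0 for all i, j, k, m. Then the following components of c vanish: c_{0101} = 0, c_{0121} = 0, c_{0131} = 0, c_{1020} = 0, c_{1030} = 0, and c_{0123} = 0 (indices 0,1,2,3 corresponding to the paper's frame labels 2,3,4,5, so these are W₂₃ = Z₂₄ = Z₂₅ = Z₃₄ = Z₃₅ = Y₂₃ = 0). -/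
open Matrix

/-- **Vanishing Weyl components for the eigenvalue pattern `{a,a,d,d}` with `a ≠ d`.**
If `c` is a Weyl-type tensor on `Fin 4`, `B = diag(a,a,d,d)` with `a ≠ d`, and the
constraints `c_{ijkl} B_{lj} = 0` and `∑_s (c_{isjk} B_{sm} + c_{iskm} B_{sj} + c_{ismj} B_{sk}) = 0`
hold, then `W₂₃ = Z₂₄ = Z₂₅ = Z₃₄ = Z₃₅ = Y₂₃ = 0` (paper's labels `2,3,4,5 ↦ 0,1,2,3`). -/
theorem weyl_components_vanish_for_split_eigenvalues
    (c : Fin 4 → Fin 4 → Fin 4 → Fin 4 → ℝ)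
    (hanti : ∀ i j k l, c i j k l = -c j i k l)
    (hpair : ∀ i j k l, c i j k l = c k l i j)
    (hcyc : ∀ i j k l, c i j k l + c i k l j + c i l j k = 0)
    (htrace : ∀ i j, ∑ k, c i k j k = 0)
    (a d : ℝ) (had : a ≠ d)
    (B : Matrix (Fin 4) (Fin 4) ℝ) (hB : B = Matrix.diagonal ![a, a, d, d])
    (h1 : ∀ i k, ∑ j, ∑ l, c i j k l * B l j = 0)
    (h2 : ∀ i j k m, ∑ s, (c i s j k * B s m + c i s k m * B s j + c i s m j * B s k) = 0) :
    c 0 1 0 1 = 0 ∧ c 0 1 2 1 = 0 ∧ c 0 1 3 1 = 0 ∧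
    c 1 0 2 0 = 0 ∧ c 1 0 3 0 = 0 ∧ c 0 1 2 3 = 0 := by
  subst hB
  have hsub : a - d ≠ 0 := sub_ne_zero.mpr had
  have t00 := htrace 0 0
  simp only [Fin.sum_univ_four] at t00
  have f00 := h1 0 0
  have e1 := h2 1 2 1 0
  have e2 := h2 1 3 1 0
  have e3 := h2 0 2 3 1
  have e4 := h2 0 0 1 2
  have e5 := h2 0 0 1 3
  simp [Fin.sum_univ_four, Matrix.diagonal_apply] at f00 e1 e2 e3 e4 e5
  -- W₂₃
  have w : c 0 1 0 1 = 0 := by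
    have h : (a - d) * c 0 1 0 1 = 0 := by
      linear_combination f00 - d * t00 - ((a - d)/2) * (hanti 0 0 0 0)
    exact (mul_eq_zero.mp h).resolve_left hsub
  -- Z₂₄
  have z24 : c 0 1 2 1 = 0 := by
    have h : (a - d) * c 1 0 2 1 = 0 := by
      linear_combination e1 - d * (hcyc 1 2 1 0) - ((a - d)/2) * (hanti 1 1 0 2)
    have h0 : c 1 0 2 1 = 0 := (mul_eq_zero.mp h).resolve_left hsub
    linear_combination hanti 0 1 2 1 - h0
  -- Z₂₅
  have z25 : c 0 1 3 1 = 0 := by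
    have h : (a - d) * c 1 0 3 1 = 0 := by
      linear_combination e2 - d * (hcyc 1 3 1 0) - ((a - d)/2) * (hanti 1 1 0 3)
    have h0 : c 1 0 3 1 = 0 := (mul_eq_zero.mp h).resolve_left hsub
    linear_combination hanti 0 1 3 1 - h0
  -- Z₃₄
  have z34 : c 1 0 2 0 = 0 := by
    have h : (a - d) * c 0 2 0 1 = 0 := by
      linear_combination a * (hcyc 0 2 0 1) - e4
    have h0 : c 0 2 0 1 = 0 := (mul_eq_zero.mp h).resolve_left hsub
    linear_combination hanti 1 0 2 0 - hcyc 0 2 0 1 + h0 + (hanti 0 0 1 2)/2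
  -- Z₃₅
  have z35 : c 1 0 3 0 = 0 := by
    have h : (a - d) * c 0 3 0 1 = 0 := by
      linear_combination a * (hcyc 0 3 0 1) - e5
    have h0 : c 0 3 0 1 = 0 := (mul_eq_zero.mp h).resolve_left hsub
    linear_combination hanti 1 0 3 0 - hcyc 0 3 0 1 + h0 + (hanti 0 0 1 3)/2
  -- Y₂₃
  have y : c 0 1 2 3 = 0 := by
    have h : (a - d) * c 0 1 2 3 = 0 := by
      linear_combination e3 - d * (hcyc 0 1 2 3)
    exact (mul_eq_zero.mp h).resolve_left hsub
  exact ⟨w, z24, z25, z34, z35, y⟩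
end

section
/- Let b₂₄, b₂₅, b₃₄, b₃₅ and W₂₅, Y₂₄, Z₂₃, Z₄₅ be real numbers satisfying the linear system: −b₂₄W₂₅ − b₃₅Y₂₄ + b₃₄Z₂₃ + b₂₅Z₄₅ = 0; b₂₅W₂₅ − b₃₄Y₂₄ − b₃₅Z₂₃ + b₂₄Z₄₅ = 0; b₃₄W₂₅ − b₂₅Y₂₄ + b₂₄Z₂₃ − b₃₅Z₄₅ = 0; b₃₅W₂₅ + b₂₄Y₂₄ + b₂₅Z₂₃ + b₃₄Z₄₅ = 0. If (W₂₅, Y₂₄, Z₂₃, Z₄₅) ≠ (0, 0, 0, 0), then either (b₃₅ = −b₂₄ and b₃₄ = b₂₅) or (b₃₅ = b₂₄ and b₃₄ = −b₂₅). -/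
/-- **Vanishing determinant condition for the twisting off-diagonal block.**
If the linear system (54)–(55) of the paper holds and the Weyl components
`(W₂₅, Y₂₄, Z₂₃, Z₄₅)` are not all zero, then `b₃₅ = ∓b₂₄` and `b₃₄ = ±b₂₅`
(with correlated signs). -/
theorem twist_block_determinant_condition
    (b₂₄ b₂₅ b₃₄ b₃₅ W₂₅ Y₂₄ Z₂₃ Z₄₅ : ℝ)
    (h1 : -b₂₄ * W₂₅ - b₃₅ * Y₂₄ + b₃₄ * Z₂₃ + b₂₅ * Z₄₅ = 0)
    (h2 : b₂₅ * W₂₅ - b₃₄ * Y₂₄ - b₃₅ * Z₂₃ + b₂₄ * Z₄₅ = 0)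
    (h3 : b₃₄ * W₂₅ - b₂₅ * Y₂₄ + b₂₄ * Z₂₃ - b₃₅ * Z₄₅ = 0)
    (h4 : b₃₅ * W₂₅ + b₂₄ * Y₂₄ + b₂₅ * Z₂₃ + b₃₄ * Z₄₅ = 0)
    (hW : ¬(W₂₅ = 0 ∧ Y₂₄ = 0 ∧ Z₂₃ = 0 ∧ Z₄₅ = 0)) :
    (b₃₅ = -b₂₄ ∧ b₃₄ = b₂₅) ∨ (b₃₅ = b₂₄ ∧ b₃₄ = -b₂₅) := by
  set D : ℝ := ((b₂₄ + b₃₅)^2 + (b₃₄ - b₂₅)^2) * ((b₂₄ - b₃₅)^2 + (b₃₄ + b₂₅)^2) with hDdef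
  have hDW : D * W₂₅ = 0 := by
    linear_combination
      (-2*b₂₅*b₃₄*b₃₅ + b₂₄*b₃₅^2 - b₂₄*b₃₄^2 - b₂₄*b₂₅^2 - b₂₄^3) * h1 +
      (b₂₅*b₃₅^2 - b₂₅*b₃₄^2 + b₂₅^3 + 2*b₂₄*b₃₄*b₃₅ + b₂₄^2*b₂₅) * h2 +
      (b₃₄*b₃₅^2 + b₃₄^3 - b₂₅^2*b₃₄ + 2*b₂₄*b₂₅*b₃₅ + b₂₄^2*b₃₄) * h3 +
      (b₃₅^3 + b₃₄^2*b₃₅ + b₂₅^2*b₃₅ + 2*b₂₄*b₂₅*b₃₄ - b₂₄^2*b₃₅) * h4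
  have hDY : D * Y₂₄ = 0 := by
    linear_combination
      (-b₃₅^3 - b₃₄^2*b₃₅ - b₂₅^2*b₃₅ - 2*b₂₄*b₂₅*b₃₄ + b₂₄^2*b₃₅) * h1 +
      (-b₃₄*b₃₅^2 - b₃₄^3 + b₂₅^2*b₃₄ - 2*b₂₄*b₂₅*b₃₅ - b₂₄^2*b₃₄) * h2 +
      (-b₂₅*b₃₅^2 + b₂₅*b₃₄^2 - b₂₅^3 - 2*b₂₄*b₃₄*b₃₅ - b₂₄^2*b₂₅) * h3 +
      (2*b₂₅*b₃₄*b₃₅ - b₂₄*b₃₅^2 + b₂₄*b₃₄^2 + b₂₄*b₂₅^2 + b₂₄^3) * h4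
  have hDZ : D * Z₂₃ = 0 := by
    linear_combination
      (b₃₄*b₃₅^2 + b₃₄^3 - b₂₅^2*b₃₄ + 2*b₂₄*b₂₅*b₃₅ + b₂₄^2*b₃₄) * h1 +
      (-b₃₅^3 - b₃₄^2*b₃₅ - b₂₅^2*b₃₅ - 2*b₂₄*b₂₅*b₃₄ + b₂₄^2*b₃₅) * h2 +
      (2*b₂₅*b₃₄*b₃₅ - b₂₄*b₃₅^2 + b₂₄*b₃₄^2 + b₂₄*b₂₅^2 + b₂₄^3) * h3 +
      (b₂₅*b₃₅^2 - b₂₅*b₃₄^2 + b₂₅^3 + 2*b₂₄*b₃₄*b₃₅ + b₂₄^2*b₂₅) * h4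
  have hDZ45 : D * Z₄₅ = 0 := by
    linear_combination
      (b₂₅*b₃₅^2 - b₂₅*b₃₄^2 + b₂₅^3 + 2*b₂₄*b₃₄*b₃₅ + b₂₄^2*b₂₅) * h1 +
      (2*b₂₅*b₃₄*b₃₅ - b₂₄*b₃₅^2 + b₂₄*b₃₄^2 + b₂₄*b₂₅^2 + b₂₄^3) * h2 +
      (-b₃₅^3 - b₃₄^2*b₃₅ - b₂₅^2*b₃₅ - 2*b₂₄*b₂₅*b₃₄ + b₂₄^2*b₃₅) * h3 +
      (b₃₄*b₃₅^2 + b₃₄^3 - b₂₅^2*b₃₄ + 2*b₂₄*b₂₅*b₃₅ + b₂₄^2*b₃₄) * h4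
  have hD : D = 0 := by
    by_contra hD
    exact hW ⟨(mul_eq_zero.mp hDW).resolve_left hD, (mul_eq_zero.mp hDY).resolve_left hD,
      (mul_eq_zero.mp hDZ).resolve_left hD, (mul_eq_zero.mp hDZ45).resolve_left hD⟩
  rcases mul_eq_zero.mp hD with h | h
  · left
    have ha : (b₂₄ + b₃₅)^2 = 0 := by nlinarith [sq_nonneg (b₃₄ - b₂₅)]
    have hb : (b₃₄ - b₂₅)^2 = 0 := by nlinarith [sq_nonneg (b₂₄ + b₃₅)]
    have ha' := pow_eq_zero_iff (n := 2) two_ne_zero |>.mp ha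
    have hb' := pow_eq_zero_iff (n := 2) two_ne_zero |>.mp hb
    constructor <;> linarith
  · right
    have ha : (b₂₄ - b₃₅)^2 = 0 := by nlinarith [sq_nonneg (b₃₄ + b₂₅)]
    have hb : (b₃₄ + b₂₅)^2 = 0 := by nlinarith [sq_nonneg (b₂₄ - b₃₅)]
    have ha' := pow_eq_zero_iff (n := 2) two_ne_zero |>.mp ha
    have hb' := pow_eq_zero_iff (n := 2) two_ne_zero |>.mp hb
    constructor <;> linarith
end

section
/- Let b₂₄, b₂₅, b₃₄, b₃₅ and W₂₅, Y₂₄, Z₂₃, Z₄₅ be real numbers satisfying the linear system: −b₂₄W₂₅ − b₃₅Y₂₄ + b₃₄Z₂₃ + b₂₅Z₄₅ = 0; b₂₅W₂₅ − b₃₄Y₂₄ − b₃₅Z₂₃ + b₂₄Z₄₅ = 0; b₃₄W₂₅ − b₂₅Y₂₄ + b₂₄Z₂₃ − b₃₅Z₄₅ = 0; b₃₅W₂₅ + b₂₄Y₂₄ + b₂₅Z₂₃ + b₃₄Z₄₅ = 0. Suppose moreover that b₂₄² + b₂₅² ≠ 0. If b₃₅ = −b₂₄ and b₃₄ = b₂₅,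 then Y₂₄ = W₂₅ and Z₄₅ = −Z₂₃. If instead b₃₅ = b₂₄ and b₃₄ = −b₂₅, then Y₂₄ = −W₂₅ and Z₄₅ = Z₂₃. -/
/-- **Weyl component relations in the twisting subcase 2(b).**
If the linear system (54)–(55) of the paper holds with `b₂₄² + b₂₅² ≠ 0`, then for
`b₃₅ = -b₂₄`, `b₃₄ = b₂₅` one gets `Y₂₄ = W₂₅` and `Z₄₅ = -Z₂₃`, while for
`b₃₅ = b₂₄`, `b₃₄ = -b₂₅` one gets `Y₂₄ = -W₂₅` and `Z₄₅ = Z₂₃`. -/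
theorem weyl_relations_twisting_subcase
    (b₂₄ b₂₅ b₃₄ b₃₅ W₂₅ Y₂₄ Z₂₃ Z₄₅ : ℝ)
    (h1 : -b₂₄ * W₂₅ - b₃₅ * Y₂₄ + b₃₄ * Z₂₃ + b₂₅ * Z₄₅ = 0)
    (h2 : b₂₅ * W₂₅ - b₃₄ * Y₂₄ - b₃₅ * Z₂₃ + b₂₄ * Z₄₅ = 0)
    (h3 : b₃₄ * W₂₅ - b₂₅ * Y₂₄ + b₂₄ * Z₂₃ - b₃₅ * Z₄₅ = 0)
    (h4 : b₃₅ * W₂₅ + b₂₄ * Y₂₄ + b₂₅ * Z₂₃ + b₃₄ * Z₄₅ = 0)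
    (hb : b₂₄ ^ 2 + b₂₅ ^ 2 ≠ 0) :
    ((b₃₅ = -b₂₄ ∧ b₃₄ = b₂₅) → (Y₂₄ = W₂₅ ∧ Z₄₅ = -Z₂₃)) ∧
    ((b₃₅ = b₂₄ ∧ b₃₄ = -b₂₅) → (Y₂₄ = -W₂₅ ∧ Z₄₅ = Z₂₃)) := by
  constructor
  · rintro ⟨e1, e2⟩
    rw [e1, e2] at h1 h2
    have key1 : (b₂₄ ^ 2 + b₂₅ ^ 2) * (Y₂₄ - W₂₅) = 0 := by
      linear_combination b₂₄ * h1 - b₂₅ * h2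
    have key2 : (b₂₄ ^ 2 + b₂₅ ^ 2) * (Z₄₅ + Z₂₃) = 0 := by
      linear_combination b₂₅ * h1 + b₂₄ * h2
    constructor
    · rcases mul_eq_zero.mp key1 with h | h
      · exact absurd h hb
      · linarith
    · rcases mul_eq_zero.mp key2 with h | h
      · exact absurd h hb
      · linarith
  · rintro ⟨e1, e2⟩
    rw [e1, e2] at h1 h2
    have key1 : (b₂₄ ^ 2 + b₂₅ ^ 2) * (Y₂₄ + W₂₅) = 0 := by
      linear_combination -b₂₄ * h1 + b₂₅ * h2
    have key2 : (b₂₄ ^ 2 + b₂₅ ^ 2) * (Z₄₅ - Z₂₃) = 0 := by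
      linear_combination b₂₅ * h1 + b₂₄ * h2
    constructor
    · rcases mul_eq_zero.mp key1 with h | h
      · exact absurd h hb
      · linarith
    · rcases mul_eq_zero.mp key2 with h | h
      · exact absurd h hb
      · linarith
end

section
/- Let m ≥ 3, let b be an m×m real matrix, and let ψ : Fin m → ℝ. Suppose that for all sufficiently large r ∈ ℝ (so that r·1 − b is invertible) and for all i: 2·∑_{l,k} ψ_l · ρ(r)_{l k} · ρ(r)_{k i} = ( ∑_k ρ(r)_{k k} ) · ∑_l ψ_l · ρ(r)_{l i}, where ρ(r) = (r·1 − b)⁻¹. Then ψ = 0. -/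
open Matrix Filter Topology

/-! The defect `Ψ_i - 2 Ψ_{ijj}` is a quadratic form in `ρ`, so it also vanishes at the
rescaled resolvent `r ρ(r) = (1 - r⁻¹ b)⁻¹`, which tends to `1` as `r → ∞`. By continuity
the defect vanishes at `ρ = 1`, where it equals `(2 - m) ψ`. -/

variable {n : Type*} [Fintype n]

theorem Matrix.inv_smul_of_ne_zero [DecidableEq n] {K : Type*} [Field K] (A : Matrix n n K)
    {c : K} (hc : c ≠ 0) : (c • A)⁻¹ = c⁻¹ • A⁻¹ := by
  by_cases hA : IsUnit A.det
  · exact inv_smul' A (Units.mk0 c hc) hA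
  · have hcA : ¬IsUnit (c • A).det := by
      rwa [det_smul, IsUnit.mul_iff, not_and_or, or_iff_right (by simp [hc])]
    rw [nonsing_inv_apply_not_isUnit _ hA, nonsing_inv_apply_not_isUnit _ hcA, smul_zero]

theorem tendsto_smul_inv_smul_one_sub_atTop [DecidableEq n] (b : Matrix n n ℝ) :
    Tendsto (fun r : ℝ => r • (r • (1 : Matrix n n ℝ) - b)⁻¹) atTop (𝓝 1) := by
  have hinv : ContinuousAt Inv.inv (1 : Matrix n n ℝ) := continuousAt_matrix_inv _ (by simp)
  have hsub : Tendsto (fun r : ℝ => 1 - r⁻¹ • b) atTop (𝓝 (1 : Matrix n n ℝ)) := by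
    simpa using tendsto_const_nhds.sub (tendsto_inv_atTop_zero.smul_const (M := ℝ) b)
  refine (inv_one (G := Matrix n n ℝ) ▸ hinv.tendsto.comp hsub).congr' ?_
  filter_upwards [eventually_gt_atTop 0] with r hr
  calc (1 - r⁻¹ • b)⁻¹ = (r⁻¹ • (r • 1 - b))⁻¹ := by
        rw [smul_sub, smul_smul, inv_mul_cancel₀ hr.ne', one_smul]
    _ = r • (r • 1 - b)⁻¹ := by rw [inv_smul_of_ne_zero _ (inv_ne_zero hr.ne'), inv_inv]

section BianchiDefect

variable {R : Type*} [CommRing R]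

/-- `bianchiDefect ψ ρ i` is `Ψ_i - 2 Ψ_{ijj}` for the integrated Bianchi expressions built
from `ρ` and `ψ`. -/
def bianchiDefect (ψ : n → R) (ρ : Matrix n n R) : n → R :=
  (2 : R) • ψ ᵥ* (ρ * ρ) - ρ.trace • ψ ᵥ* ρ

theorem bianchiDefect_apply (ψ : n → R) (ρ : Matrix n n R) (i : n) :
    bianchiDefect ψ ρ i =
      2 * ∑ l, ∑ k, ψ l * ρ l k * ρ k i - (∑ k, ρ k k) * ∑ l, ψ l * ρ l i := by
  simp [bianchiDefect, vecMul, dotProduct, mul_apply, trace, Finset.mul_sum, mul_assoc]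

theorem bianchiDefect_smul (ψ : n → R) (c : R) (ρ : Matrix n n R) :
    bianchiDefect ψ (c • ρ) = c ^ 2 • bianchiDefect ψ ρ := by
  simp only [bianchiDefect, smul_mul_smul, trace_smul, vecMul_smul, smul_eq_mul]
  module

theorem bianchiDefect_one [DecidableEq n] (ψ : n → R) :
    bianchiDefect ψ 1 = (2 - Fintype.card n : R) • ψ := by
  simp only [bianchiDefect, mul_one, vecMul_one, trace_one, sub_smul]

theorem continuous_bianchiDefect (ψ : n → ℝ) : Continuous (bianchiDefect ψ) := by
  unfold bianchiDefect
  fun_prop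

end BianchiDefect

/-- **The step `Ψ_i = 0` (eq. (29) ⇒ ψ = 0).**
If `2 ∑_{l,k} ψ_l ρ(r)_{lk} ρ(r)_{ki} = (tr ρ(r)) ∑_l ψ_l ρ(r)_{li}` holds for all
sufficiently large `r` (with `ρ(r) = (r·1 - b)⁻¹` and `m ≥ 3`), then `ψ = 0`. -/
theorem psi_vanishes
    (m : ℕ) (hm : 3 ≤ m) (b : Matrix (Fin m) (Fin m) ℝ) (ψ : Fin m → ℝ)
    (h : ∃ R : ℝ, ∀ r : ℝ, R ≤ r →
      IsUnit (r • (1 : Matrix (Fin m) (Fin m) ℝ) - b) ∧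
      ∀ i, 2 * ∑ l, ∑ k, ψ l * (r • (1 : Matrix (Fin m) (Fin m) ℝ) - b)⁻¹ l k
              * (r • (1 : Matrix (Fin m) (Fin m) ℝ) - b)⁻¹ k i
        = (∑ k, (r • (1 : Matrix (Fin m) (Fin m) ℝ) - b)⁻¹ k k)
            * ∑ l, ψ l * (r • (1 : Matrix (Fin m) (Fin m) ℝ) - b)⁻¹ l i) :
    ψ = 0 := by
  obtain ⟨R, hR⟩ := h
  have hzero : ∀ᶠ r : ℝ in atTop, bianchiDefect ψ (r • (r • 1 - b)⁻¹) = 0 := by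
    filter_upwards [eventually_ge_atTop R] with r hr
    have hρ : bianchiDefect ψ (r • 1 - b)⁻¹ = 0 := funext fun i => by
      rw [bianchiDefect_apply, (hR r hr).2 i, sub_self, Pi.zero_apply]
    rw [bianchiDefect_smul, hρ, smul_zero]
  have hlim := (continuous_bianchiDefect ψ).continuousAt.tendsto.comp
    (tendsto_smul_inv_smul_one_sub_atTop b)
  have hone : bianchiDefect ψ 1 = 0 := tendsto_nhds_unique (hlim.congr' hzero) tendsto_const_nhds
  rw [bianchiDefect_one, Fintype.card_fin] at hone
  have hm2 : (2 - m : ℝ) ≠ 0 := by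
    have : (3 : ℝ) ≤ m := by exact_mod_cast hm
    linarith
  exact (smul_eq_zero.mp hone).resolve_left hm2
end
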